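/- arXiv:2602.06461 — 5 statements merged into one kernel-verified Lean document; each statement's English description precedes it below -/
import Mathlib

section
/- Assume the abstract setting described in the context. Let μ > 0 satisfy M·c·μ^{ρ−1}·B ≤ 1/4, let τ ∈ (0,∞), and let g : (0,τ] → V be continuous with t^{αε}‖g(t)‖_V ≤ (3/4)μ for all t ∈ (0,τ]. Then there exists exactly one continuous u : (0,τ] → V such that sup_{t∈(0,τ]} t^{αε}‖u(t)‖_V ≤ μ and u is a mild solution with forcing g on (0,τ]. -/
open MeasureTheory Set Filter Topology intervalIntegral
open scoped ENNReal

/-- `u` is a mild solution with forcing `g` on the set `S ⊆ (0,∞)`: `u` is continuous on `S`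
and for every `t ∈ S` the Bochner integral `∫₀^t R(t-s) f(u(s)) ds` converges and
`u t = g t + ∫₀^t R(t-s) f(u(s)) ds`. -/
def IsMildSolutionOn {V W : Type*} [NormedAddCommGroup V] [NormedSpace ℝ V]
    [NormedAddCommGroup W] [NormedSpace ℝ W]
    (R : ℝ → W →L[ℝ] V) (f : V → W) (g u : ℝ → V) (S : Set ℝ) : Prop :=
  ContinuousOn u S ∧ ∀ t ∈ S,
    IntervalIntegrable (fun s => R (t - s) (f (u s))) volume 0 t ∧
    u t = g t + ∫ s in (0:ℝ)..t, R (t - s) (f (u s))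

/-! The mild-solution equation is the fixed-point problem `u = Φ u` for
`Φ u t = g t + ∫₀ᵗ R(t-s) f(u s) ds`, posed on the ball of radius `μ` for the weighted norm
`sup_{0<t≤τ} t^{αε} ‖u t‖`. After the substitution `s = tσ`, the smoothing bound on `R` and the
growth of `f` reduce the Duhamel term to the Beta integral `B`:
`t^{αε} ‖∫₀ᵗ R(t-s) f(u s) ds‖ ≤ M c μ^ρ B ≤ μ/4`, and likewise for differences with the
constant `2 M c μ^{ρ-1} B ≤ 1/2`. So `Φ` maps the ball to itself and is a contraction there, and
Banach's theorem, applied in the complete space of bounded continuous functions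
`t ↦ t^{αε} u t`, gives existence and uniqueness. -/

open scoped NNReal BoundedContinuousFunction

section SmoothingKernel

variable {X V W : Type*} [TopologicalSpace X] [NormedAddCommGroup V] [NormedSpace ℝ V]
  [NormedAddCommGroup W] [NormedSpace ℝ W]

theorem tendsto_clm_apply_of_norm_le {ι : Type*} {l : Filter ι} {T : ι → W →L[ℝ] V}
    {w : ι → W} {w₀ : W} {v₀ : V} {C : ℝ} (hT : Tendsto (fun i => T i w₀) l (𝓝 v₀))
    (hw : Tendsto w l (𝓝 w₀)) (hC : ∀ᶠ i in l, ‖T i‖ ≤ C) :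
    Tendsto (fun i => T i (w i)) l (𝓝 v₀) := by
  have hsmall : Tendsto (fun i => T i (w i - w₀)) l (𝓝 0) := by
    refine squeeze_zero_norm' (hC.mono fun i hi => (T i).le_of_opNorm_le hi _) ?_
    simpa using ((tendsto_sub_nhds_zero_iff.2 hw).norm.const_mul C)
  simpa using hT.add hsmall

-- The smoothing estimate of the Mittag-Leffler family `R_α(t A_q) : X^{ρε}_q → X^{1+ε}_q`.
structure IsSmoothingKernel (R : ℝ → W →L[ℝ] V) (M a : ℝ) : Prop where
  continuousOn_apply : ∀ w : W, ContinuousOn (fun t => R t w) (Ioi 0)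
  norm_apply_le : ∀ t > (0:ℝ), ∀ w : W, ‖R t w‖ ≤ M * t ^ a * ‖w‖
  nonneg : 0 ≤ M

theorem mul_mem_Ioc_zero {τ t σ : ℝ} (ht : t ∈ Ioc 0 τ) (hσ : σ ∈ Ioc 0 1) : t * σ ∈ Ioc 0 τ :=
  ⟨mul_pos ht.1 hσ.1, (mul_le_of_le_one_right ht.1.le hσ.2).trans ht.2⟩

theorem ae_mem_Ioo_of_mem_uIoc_zero_one : ∀ᵐ σ : ℝ, σ ∈ uIoc 0 1 → σ ∈ Ioo (0:ℝ) 1 := by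
  filter_upwards [compl_mem_ae_iff.2 (measure_singleton (1:ℝ))] with σ hσ hσ'
  rw [uIoc_of_le zero_le_one] at hσ'
  exact ⟨hσ'.1, lt_of_le_of_ne hσ'.2 hσ⟩

theorem integral_convolution_eq_smul_integral_rescaled (R : ℝ → W →L[ℝ] V) (h : ℝ → W) (t : ℝ) :
    ∫ s in (0:ℝ)..t, R (t - s) (h s) = t • ∫ σ in (0:ℝ)..1, R (t - t * σ) (h (t * σ)) := by
  have := intervalIntegral.smul_integral_comp_mul_left (a := 0) (b := 1)
    (fun s => R (t - s) (h s)) t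
  rw [mul_zero, mul_one] at this
  exact this.symm

namespace IsSmoothingKernel

variable {R : ℝ → W →L[ℝ] V} {M a b τ D : ℝ} {h : ℝ → W}

theorem continuousOn_comp (hR : IsSmoothingKernel R M a) {s : Set X} {φ : X → ℝ} {ψ : X → W}
    (hφ : ContinuousOn φ s) (hφpos : ∀ x ∈ s, 0 < φ x) (hψ : ContinuousOn ψ s) :
    ContinuousOn (fun x => R (φ x) (ψ x)) s := by
  intro x₀ hx₀
  have hpow : ContinuousWithinAt (fun x => M * φ x ^ a) s x₀ :=
    continuousWithinAt_const.mul ((hφ x₀ hx₀).rpow_const (Or.inl (hφpos x₀ hx₀).ne'))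
  refine tendsto_clm_apply_of_norm_le (C := M * φ x₀ ^ a + 1) ?_ (hψ x₀ hx₀) ?_
  · exact (hR.continuousOn_apply (ψ x₀) _ (hφpos x₀ hx₀)).comp (hφ x₀ hx₀) hφpos
  · filter_upwards [self_mem_nhdsWithin, hpow.eventually (gt_mem_nhds (lt_add_one _))]
      with x hx hlt
    refine ((R (φ x)).opNorm_le_bound ?_ (hR.norm_apply_le _ (hφpos x hx))).trans hlt.le
    exact mul_nonneg hR.nonneg (Real.rpow_nonneg (hφpos x hx).le _)

theorem norm_rescaled_le (hR : IsSmoothingKernel R M a)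
    (hhb : ∀ s ∈ Ioc 0 τ, ‖h s‖ ≤ D * s ^ (-b)) {t σ : ℝ} (ht : t ∈ Ioc 0 τ)
    (hσ : σ ∈ Ioo 0 1) :
    ‖R (t - t * σ) (h (t * σ))‖ ≤ M * D * t ^ (a - b) * ((1 - σ) ^ a * σ ^ (-b)) := by
  have h1σ : 0 < 1 - σ := sub_pos.2 hσ.2
  have hpos : 0 < t - t * σ := by rw [← mul_one_sub]; exact mul_pos ht.1 h1σ
  calc ‖R (t - t * σ) (h (t * σ))‖ ≤ M * (t - t * σ) ^ a * ‖h (t * σ)‖ :=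
        hR.norm_apply_le _ hpos _
    _ ≤ M * (t - t * σ) ^ a * (D * (t * σ) ^ (-b)) :=
        mul_le_mul_of_nonneg_left (hhb _ (mul_mem_Ioc_zero ht (Ioo_subset_Ioc_self hσ)))
          (mul_nonneg hR.nonneg (Real.rpow_nonneg hpos.le _))
    _ = M * D * t ^ (a - b) * ((1 - σ) ^ a * σ ^ (-b)) := by
        rw [← mul_one_sub, Real.mul_rpow ht.1.le h1σ.le, Real.mul_rpow ht.1.le hσ.1.le,
          sub_eq_add_neg a b, Real.rpow_add ht.1]
        ring

theorem continuousOn_rescaled (hR : IsSmoothingKernel R M a) (hh : ContinuousOn h (Ioc 0 τ))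
    {t : ℝ} (ht : t ∈ Ioc 0 τ) :
    ContinuousOn (fun σ => R (t - t * σ) (h (t * σ))) (Ioo 0 1) :=
  hR.continuousOn_comp (by fun_prop)
    (fun σ hσ => by rw [← mul_one_sub]; exact mul_pos ht.1 (sub_pos.2 hσ.2))
    (hh.comp (by fun_prop) fun σ hσ => mul_mem_Ioc_zero ht (Ioo_subset_Ioc_self hσ))

theorem aestronglyMeasurable_rescaled (hR : IsSmoothingKernel R M a)
    (hh : ContinuousOn h (Ioc 0 τ)) {t : ℝ} (ht : t ∈ Ioc 0 τ) :
    AEStronglyMeasurable (fun σ => R (t - t * σ) (h (t * σ))) (volume.restrict (uIoc 0 1)) := by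
  rw [uIoc_of_le zero_le_one, ← Measure.restrict_congr_set Ioo_ae_eq_Ioc]
  exact (hR.continuousOn_rescaled hh ht).aestronglyMeasurable measurableSet_Ioo

theorem intervalIntegrable_rescaled (hR : IsSmoothingKernel R M a)
    (hBint : IntervalIntegrable (fun σ => (1 - σ) ^ a * σ ^ (-b)) volume 0 1)
    (hh : ContinuousOn h (Ioc 0 τ)) (hhb : ∀ s ∈ Ioc 0 τ, ‖h s‖ ≤ D * s ^ (-b)) {t : ℝ}
    (ht : t ∈ Ioc 0 τ) : IntervalIntegrable (fun σ => R (t - t * σ) (h (t * σ))) volume 0 1 :=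
  (hBint.const_mul (M * D * t ^ (a - b))).mono_fun' (hR.aestronglyMeasurable_rescaled hh ht)
    ((ae_restrict_iff' measurableSet_uIoc).2
      (ae_mem_Ioo_of_mem_uIoc_zero_one.mono fun _ hσ hσ' => hR.norm_rescaled_le hhb ht (hσ hσ')))

theorem intervalIntegrable (hR : IsSmoothingKernel R M a)
    (hBint : IntervalIntegrable (fun σ => (1 - σ) ^ a * σ ^ (-b)) volume 0 1)
    (hh : ContinuousOn h (Ioc 0 τ)) (hhb : ∀ s ∈ Ioc 0 τ, ‖h s‖ ≤ D * s ^ (-b)) {t : ℝ}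
    (ht : t ∈ Ioc 0 τ) : IntervalIntegrable (fun s => R (t - s) (h s)) volume 0 t := by
  have key := IntervalIntegrable.comp_mul_left_iff (f := fun s => R (t - s) (h s)) (a := 0)
    (b := t) ht.1.ne'
  rw [zero_div, div_self ht.1.ne'] at key
  exact key.1 (hR.intervalIntegrable_rescaled hBint hh hhb ht)

theorem norm_integral_rescaled_le (hR : IsSmoothingKernel R M a)
    (hBint : IntervalIntegrable (fun σ => (1 - σ) ^ a * σ ^ (-b)) volume 0 1)
    (hhb : ∀ s ∈ Ioc 0 τ, ‖h s‖ ≤ D * s ^ (-b)) {t : ℝ} (ht : t ∈ Ioc 0 τ) :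
    ‖∫ σ in (0:ℝ)..1, R (t - t * σ) (h (t * σ))‖ ≤
      M * D * t ^ (a - b) * ∫ σ in (0:ℝ)..1, (1 - σ) ^ a * σ ^ (-b) := by
  rw [← intervalIntegral.integral_const_mul]
  refine intervalIntegral.norm_integral_le_of_norm_le zero_le_one ?_ (hBint.const_mul _)
  filter_upwards [ae_mem_Ioo_of_mem_uIoc_zero_one] with σ hσ hσ'
  exact hR.norm_rescaled_le hhb ht (hσ (by rwa [uIoc_of_le zero_le_one]))

theorem norm_integral_le (hR : IsSmoothingKernel R M a)
    (hBint : IntervalIntegrable (fun σ => (1 - σ) ^ a * σ ^ (-b)) volume 0 1)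
    (hhb : ∀ s ∈ Ioc 0 τ, ‖h s‖ ≤ D * s ^ (-b)) {t : ℝ} (ht : t ∈ Ioc 0 τ) :
    ‖∫ s in (0:ℝ)..t, R (t - s) (h s)‖ ≤
      M * D * (∫ σ in (0:ℝ)..1, (1 - σ) ^ a * σ ^ (-b)) * t ^ (a - b + 1) := by
  rw [integral_convolution_eq_smul_integral_rescaled, norm_smul, Real.norm_of_nonneg ht.1.le,
    Real.rpow_add_one ht.1.ne']
  calc t * ‖∫ σ in (0:ℝ)..1, R (t - t * σ) (h (t * σ))‖
      ≤ t * (M * D * t ^ (a - b) * ∫ σ in (0:ℝ)..1, (1 - σ) ^ a * σ ^ (-b)) :=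
        mul_le_mul_of_nonneg_left (hR.norm_integral_rescaled_le hBint hhb ht) ht.1.le
    _ = _ := by ring

theorem continuousOn_integral_rescaled (hR : IsSmoothingKernel R M a)
    (hBint : IntervalIntegrable (fun σ => (1 - σ) ^ a * σ ^ (-b)) volume 0 1)
    (hh : ContinuousOn h (Ioc 0 τ)) (hhb : ∀ s ∈ Ioc 0 τ, ‖h s‖ ≤ D * s ^ (-b)) :
    ContinuousOn (fun t => ∫ σ in (0:ℝ)..1, R (t - t * σ) (h (t * σ))) (Ioc 0 τ) := by
  intro t₀ ht₀
  have hD : 0 ≤ D :=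
    nonneg_of_mul_nonneg_left ((norm_nonneg _).trans (hhb t₀ ht₀))
      (Real.rpow_pos_of_pos ht₀.1 _)
  -- the factor `t ^ (a - b)` of `norm_rescaled_le` is unbounded on `(0, τ]`, but bounded near `t₀`
  have hpow : ∀ᶠ t in 𝓝[Ioc 0 τ] t₀, t ^ (a - b) < t₀ ^ (a - b) + 1 :=
    ((continuousAt_id.rpow_const (Or.inl ht₀.1.ne')).continuousWithinAt.eventually
      (gt_mem_nhds (lt_add_one _)))
  refine intervalIntegral.continuousWithinAt_of_dominated_interval
    (bound := fun σ => M * D * (t₀ ^ (a - b) + 1) * ((1 - σ) ^ a * σ ^ (-b))) ?_ ?_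
    (hBint.const_mul _) ?_
  · filter_upwards [self_mem_nhdsWithin] with t ht
    exact hR.aestronglyMeasurable_rescaled hh ht
  · filter_upwards [self_mem_nhdsWithin, hpow] with t ht hlt
    filter_upwards [ae_mem_Ioo_of_mem_uIoc_zero_one] with σ hσ hσ'
    have hσ := hσ hσ'
    refine (hR.norm_rescaled_le hhb ht hσ).trans ?_
    exact mul_le_mul_of_nonneg_right (mul_le_mul_of_nonneg_left hlt.le (mul_nonneg hR.nonneg hD))
      (mul_nonneg (Real.rpow_nonneg (sub_pos.2 hσ.2).le _) (Real.rpow_nonneg hσ.1.le _))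
  · filter_upwards [ae_mem_Ioo_of_mem_uIoc_zero_one] with σ hσ hσ'
    have hσ := hσ hσ'
    refine hR.continuousOn_comp (φ := fun t => t - t * σ) (by fun_prop) ?_
      (hh.comp (by fun_prop) fun t ht => mul_mem_Ioc_zero ht (Ioo_subset_Ioc_self hσ)) t₀ ht₀
    intro t ht
    rw [← mul_one_sub]
    exact mul_pos ht.1 (sub_pos.2 hσ.2)

theorem continuousOn_integral (hR : IsSmoothingKernel R M a)
    (hBint : IntervalIntegrable (fun σ => (1 - σ) ^ a * σ ^ (-b)) volume 0 1)
    (hh : ContinuousOn h (Ioc 0 τ)) (hhb : ∀ s ∈ Ioc 0 τ, ‖h s‖ ≤ D * s ^ (-b)) :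
    ContinuousOn (fun t => ∫ s in (0:ℝ)..t, R (t - s) (h s)) (Ioc 0 τ) := by
  simp_rw [integral_convolution_eq_smul_integral_rescaled]
  exact continuousOn_id.smul (hR.continuousOn_integral_rescaled hBint hh hhb)

end IsSmoothingKernel

end SmoothingKernel

section WeightedSpace

variable {X V : Type*} [TopologicalSpace X] [NormedAddCommGroup V] [NormedSpace ℝ V]
  {ω : X → ℝ} {S : Set X} {μ : ℝ}

variable (ω S) in
def weightedClosedBall (μ : ℝ) : Set (X → V) :=
  {u | ContinuousOn u S ∧ ∀ x ∈ S, ω x * ‖u x‖ ≤ μ}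

open Classical in
variable (ω S) in
noncomputable def unweight (w : S →ᵇ V) : X → V :=
  fun x => if hx : x ∈ S then (ω x)⁻¹ • w ⟨x, hx⟩ else 0

noncomputable def weightedClosedBall.toBCF (hω : ContinuousOn ω S) (hωpos : ∀ x ∈ S, 0 < ω x)
    {u : X → V} (hu : u ∈ weightedClosedBall ω S μ) : S →ᵇ V :=
  BoundedContinuousFunction.ofNormedAddCommGroup (fun x : S => ω x • u x)
    (hω.domRestrict.smul hu.1.domRestrict) μ fun x => by
      rw [norm_smul, Real.norm_of_nonneg (hωpos x x.2).le]
      exact hu.2 x x.2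

variable (hω : ContinuousOn ω S) (hωpos : ∀ x ∈ S, 0 < ω x)

theorem weightedClosedBall.toBCF_apply {u : X → V} (hu : u ∈ weightedClosedBall ω S μ) (x : S) :
    toBCF hω hωpos hu x = ω x • u x :=
  rfl

theorem weightedClosedBall.norm_toBCF_le (hμ : 0 ≤ μ) {u : X → V}
    (hu : u ∈ weightedClosedBall ω S μ) : ‖toBCF hω hωpos hu‖ ≤ μ :=
  BoundedContinuousFunction.norm_ofNormedAddCommGroup_le _ hμ _

theorem weightedClosedBall.dist_toBCF_le_iff {u v : X → V} (hu : u ∈ weightedClosedBall ω S μ)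
    (hv : v ∈ weightedClosedBall ω S μ) {d : ℝ} (hd : 0 ≤ d) :
    dist (toBCF hω hωpos hu) (toBCF hω hωpos hv) ≤ d ↔ ∀ x ∈ S, ω x * ‖u x - v x‖ ≤ d := by
  rw [BoundedContinuousFunction.dist_le hd, Subtype.forall]
  refine forall₂_congr fun x hx => ?_
  rw [toBCF_apply, toBCF_apply, dist_eq_norm, ← smul_sub, norm_smul,
    Real.norm_of_nonneg (hωpos x hx).le]

theorem unweight_apply (w : S →ᵇ V) {x : X} (hx : x ∈ S) :
    unweight ω S w x = (ω x)⁻¹ • w ⟨x, hx⟩ :=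
  dif_pos hx

theorem unweight_mem_weightedClosedBall (hω : ContinuousOn ω S) (hωpos : ∀ x ∈ S, 0 < ω x)
    {w : S →ᵇ V} (hw : ‖w‖ ≤ μ) :
    unweight ω S w ∈ weightedClosedBall ω S μ := by
  refine ⟨continuousOn_iff_continuous_domRestrict.2 ?_, fun x hx => ?_⟩
  · have : S.domRestrict (unweight ω S w) = fun x : S => (ω x)⁻¹ • w x := by
      funext x
      exact unweight_apply w x.2
    rw [this]
    exact (hω.domRestrict.inv₀ fun x => (hωpos x x.2).ne').smul w.continuous
  · rw [unweight_apply w hx, norm_smul, Real.norm_of_nonneg (inv_nonneg.2 (hωpos x hx).le),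
      ← mul_assoc, mul_inv_cancel₀ (hωpos x hx).ne', one_mul]
    exact (w.norm_coe_le_norm _).trans hw

theorem toBCF_unweight {w : S →ᵇ V} (hw : ‖w‖ ≤ μ) :
    weightedClosedBall.toBCF hω hωpos (unweight_mem_weightedClosedBall hω hωpos hw) = w := by
  ext x
  rw [weightedClosedBall.toBCF_apply, unweight_apply w x.2, smul_smul,
    mul_inv_cancel₀ (hωpos x x.2).ne', one_smul]

theorem unweight_toBCF {u : X → V} (hu : u ∈ weightedClosedBall ω S μ) :
    EqOn (unweight ω S (weightedClosedBall.toBCF hω hωpos hu)) u S := fun x hx => by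
  rw [unweight_apply _ hx, weightedClosedBall.toBCF_apply, smul_smul,
    inv_mul_cancel₀ (hωpos x hx).ne', one_smul]

end WeightedSpace

open weightedClosedBall in
theorem exists_fixedPoint_of_weighted_contraction {X V : Type*} [TopologicalSpace X]
    [NormedAddCommGroup V] [NormedSpace ℝ V] [CompleteSpace V] {ω : X → ℝ} {S : Set X}
    (hω : ContinuousOn ω S) (hωpos : ∀ x ∈ S, 0 < ω x) {μ : ℝ} (hμ : 0 ≤ μ) {K : ℝ≥0}
    (hK : K < 1) {Φ : (X → V) → X → V}
    (hmaps : MapsTo Φ (weightedClosedBall ω S μ) (weightedClosedBall ω S μ))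
    (hcontr : ∀ u ∈ weightedClosedBall ω S μ, ∀ v ∈ weightedClosedBall ω S μ, ∀ d : ℝ,
      (∀ x ∈ S, ω x * ‖u x - v x‖ ≤ d) → ∀ x ∈ S, ω x * ‖Φ u x - Φ v x‖ ≤ K * d) :
    ∃ u ∈ weightedClosedBall ω S μ, EqOn (Φ u) u S ∧
      ∀ v ∈ weightedClosedBall ω S μ, EqOn (Φ v) v S → EqOn v u S := by
  let ball := Metric.closedBall (0 : S →ᵇ V) μ
  have : CompleteSpace ball := Metric.isClosed_closedBall.completeSpace_coe
  have hball (w : ball) : ‖w.1‖ ≤ μ := mem_closedBall_zero_iff.1 w.2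
  have hmem (w : ball) : unweight ω S w.1 ∈ weightedClosedBall ω S μ :=
    unweight_mem_weightedClosedBall hω hωpos (hball w)
  let T : ball → ball := fun w =>
    ⟨toBCF hω hωpos (hmaps (hmem w)), mem_closedBall_zero_iff.2 (norm_toBCF_le hω hωpos hμ _)⟩
  have hT : ContractingWith K T := by
    refine ⟨hK, LipschitzWith.of_dist_le_mul fun w w' => ?_⟩
    refine (dist_toBCF_le_iff hω hωpos (hmaps (hmem w)) (hmaps (hmem w'))
      (mul_nonneg K.2 dist_nonneg)).2 ?_
    refine hcontr _ (hmem w) _ (hmem w') _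
      ((dist_toBCF_le_iff hω hωpos (hmem w) (hmem w') dist_nonneg).1 ?_)
    rw [toBCF_unweight hω hωpos (hball w), toBCF_unweight hω hωpos (hball w')]
    rfl
  obtain ⟨w, hw, -⟩ := hT.exists_fixedPoint ⟨0, Metric.mem_closedBall_self hμ⟩ (edist_ne_top _ _)
  have hfix : EqOn (Φ (unweight ω S w.1)) (unweight ω S w.1) S := fun x hx => by
    rw [← unweight_toBCF hω hωpos (hmaps (hmem w)) hx]
    exact congrArg (fun w' : ball => unweight ω S w'.1 x) hw
  refine ⟨unweight ω S w.1, hmem w, hfix, fun v hv hΦv x hx => ?_⟩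
  set d := dist (toBCF hω hωpos hv) (toBCF hω hωpos (hmem w))
  have hd : d ≤ K * d := by
    refine (dist_toBCF_le_iff hω hωpos hv (hmem w) (mul_nonneg K.2 dist_nonneg)).2 fun y hy => ?_
    rw [← hΦv hy, ← hfix hy]
    exact hcontr _ hv _ (hmem w) d ((dist_toBCF_le_iff hω hωpos hv (hmem w) dist_nonneg).1 le_rfl)
      y hy
  have hK' : (K : ℝ) < 1 := hK
  have hd0 : d = 0 := by nlinarith [show 0 ≤ d from dist_nonneg]
  rw [← unweight_toBCF hω hωpos hv hx, ← unweight_toBCF hω hωpos (hmem w) hx, dist_eq_zero.1 hd0]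

section Nonlinearity

variable {V W : Type*} [NormedAddCommGroup V] [NormedAddCommGroup W] {f : V → W} {c ρ α ε μ τ : ℝ}

def PowerLipschitzWith (c ρ : ℝ) (f : V → W) : Prop :=
  ∀ x y : V, ‖f x - f y‖ ≤ c * (‖x‖ ^ (ρ - 1) + ‖y‖ ^ (ρ - 1)) * ‖x - y‖

theorem PowerLipschitzWith.continuous (hf : PowerLipschitzWith c ρ f) (hρ : 1 ≤ ρ) :
    Continuous f := by
  refine continuous_iff_continuousAt.2 fun x₀ => tendsto_iff_norm_sub_tendsto_zero.2 ?_
  refine squeeze_zero (fun _ => norm_nonneg _) (fun x => hf x x₀) ?_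
  have hbound : Continuous fun x : V => c * (‖x‖ ^ (ρ - 1) + ‖x₀‖ ^ (ρ - 1)) * ‖x - x₀‖ :=
    (continuous_const.mul ((continuous_norm.rpow_const fun _ => Or.inr (sub_nonneg.2 hρ)).add
      continuous_const)).mul (continuous_id.sub continuous_const).norm
  simpa using hbound.tendsto x₀

theorem rpow_mul_norm_sub_le (hρ : 1 ≤ ρ) (hc : 0 ≤ c)
    (hf : PowerLipschitzWith c ρ f)
    {x y : V} {r m d : ℝ} (hr : 0 ≤ r) (hx : r * ‖x‖ ≤ m) (hy : r * ‖y‖ ≤ m)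
    (hxy : r * ‖x - y‖ ≤ d) : r ^ ρ * ‖f x - f y‖ ≤ 2 * c * m ^ (ρ - 1) * d := by
  have hρ1 : 0 ≤ ρ - 1 := sub_nonneg.2 hρ
  have hsplit : r ^ ρ = r ^ (ρ - 1) * r := by
    rw [← Real.rpow_add_one' hr (by linarith), sub_add_cancel]
  calc r ^ ρ * ‖f x - f y‖
      ≤ r ^ ρ * (c * (‖x‖ ^ (ρ - 1) + ‖y‖ ^ (ρ - 1)) * ‖x - y‖) := by gcongr; exact hf x y
    _ = c * ((r * ‖x‖) ^ (ρ - 1) + (r * ‖y‖) ^ (ρ - 1)) * (r * ‖x - y‖) := by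
        rw [hsplit, Real.mul_rpow hr (norm_nonneg _), Real.mul_rpow hr (norm_nonneg _)]
        ring
    _ ≤ c * (m ^ (ρ - 1) + m ^ (ρ - 1)) * d := by
        have hm : 0 ≤ m := (mul_nonneg hr (norm_nonneg _)).trans hx
        gcongr
    _ = 2 * c * m ^ (ρ - 1) * d := by ring

theorem rpow_mul_norm_le (hρ : 1 < ρ) (hc : 0 ≤ c)
    (hf : PowerLipschitzWith c ρ f)
    (hf0 : f 0 = 0) {x : V} {r m : ℝ} (hr : 0 ≤ r) (hx : r * ‖x‖ ≤ m) :
    r ^ ρ * ‖f x‖ ≤ c * m ^ (ρ - 1) * m := by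
  have hsplit : r ^ ρ = r ^ (ρ - 1) * r := by
    rw [← Real.rpow_add_one' hr (by linarith), sub_add_cancel]
  have hgrowth : ‖f x‖ ≤ c * ‖x‖ ^ (ρ - 1) * ‖x‖ := by
    simpa [hf0, Real.zero_rpow (sub_pos.2 hρ).ne'] using hf x 0
  calc r ^ ρ * ‖f x‖ ≤ r ^ ρ * (c * ‖x‖ ^ (ρ - 1) * ‖x‖) := by gcongr
    _ = c * (r * ‖x‖) ^ (ρ - 1) * (r * ‖x‖) := by
        rw [hsplit, Real.mul_rpow hr (norm_nonneg _)]
        ring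
    _ ≤ c * m ^ (ρ - 1) * m := by
        have hm : 0 ≤ m := (mul_nonneg hr (norm_nonneg _)).trans hx
        gcongr

theorem le_mul_rpow_neg_of_rpow_mul_le {s b y C : ℝ} (hs : 0 < s) (h : s ^ b * y ≤ C) :
    y ≤ C * s ^ (-b) := by
  rw [Real.rpow_neg hs.le, ← div_eq_mul_inv, le_div_iff₀ (Real.rpow_pos_of_pos hs b), mul_comm]
  exact h

theorem norm_comp_le_of_mem_weightedClosedBall (hρ : 1 < ρ) (hc : 0 ≤ c)
    (hf : PowerLipschitzWith c ρ f) (hf0 : f 0 = 0) {u : ℝ → V}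
    (hu : u ∈ weightedClosedBall (fun t => t ^ (α * ε)) (Ioc 0 τ) μ) {s : ℝ}
    (hs : s ∈ Ioc 0 τ) : ‖f (u s)‖ ≤ c * μ ^ (ρ - 1) * μ * s ^ (-(α * ρ * ε)) := by
  refine le_mul_rpow_neg_of_rpow_mul_le hs.1 ?_
  have hpow : s ^ (α * ρ * ε) = (s ^ (α * ε)) ^ ρ := by
    rw [← Real.rpow_mul hs.1.le]; ring_nf
  rw [hpow]
  exact rpow_mul_norm_le hρ hc hf hf0 (Real.rpow_nonneg hs.1.le _) (hu.2 s hs)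

theorem norm_comp_sub_comp_le_of_mem_weightedClosedBall (hρ : 1 ≤ ρ) (hc : 0 ≤ c)
    (hf : PowerLipschitzWith c ρ f) {u v : ℝ → V}
    (hu : u ∈ weightedClosedBall (fun t => t ^ (α * ε)) (Ioc 0 τ) μ)
    (hv : v ∈ weightedClosedBall (fun t => t ^ (α * ε)) (Ioc 0 τ) μ) {d s : ℝ}
    (huv : s ^ (α * ε) * ‖u s - v s‖ ≤ d) (hs : s ∈ Ioc 0 τ) :
    ‖f (u s) - f (v s)‖ ≤ 2 * c * μ ^ (ρ - 1) * d * s ^ (-(α * ρ * ε)) := by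
  refine le_mul_rpow_neg_of_rpow_mul_le hs.1 ?_
  have hpow : s ^ (α * ρ * ε) = (s ^ (α * ε)) ^ ρ := by
    rw [← Real.rpow_mul hs.1.le]; ring_nf
  rw [hpow]
  exact rpow_mul_norm_sub_le hρ hc hf (Real.rpow_nonneg hs.1.le _) (hu.2 s hs) (hv.2 s hs) huv

end Nonlinearity

section MildSolution

variable {V W : Type*} [NormedAddCommGroup V] [NormedSpace ℝ V] [NormedAddCommGroup W]
  [NormedSpace ℝ W] {R : ℝ → W →L[ℝ] V} {f : V → W} {g : ℝ → V} {ρ α ε M c B μ τ : ℝ}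

noncomputable def mildMap (R : ℝ → W →L[ℝ] V) (f : V → W) (g u : ℝ → V) : ℝ → V :=
  fun t => g t + ∫ s in (0:ℝ)..t, R (t - s) (f (u s))

theorem rpow_mul_rpow_kernel_exponent {t : ℝ} (ht : 0 < t) :
    t ^ (α * ε) * t ^ (α * (ρ - 1) * ε - 1 - α * ρ * ε + 1) = 1 := by
  rw [← Real.rpow_add ht, show α * ε + (α * (ρ - 1) * ε - 1 - α * ρ * ε + 1) = 0 by ring,
    Real.rpow_zero]

theorem intervalIntegrable_of_mem_weightedClosedBall
    (hR : IsSmoothingKernel R M (α * (ρ - 1) * ε - 1)) (hρ : 1 < ρ) (hc : 0 ≤ c)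
    (hf : PowerLipschitzWith c ρ f) (hf0 : f 0 = 0)
    (hBint : IntervalIntegrable
      (fun s => (1 - s) ^ (α * (ρ - 1) * ε - 1) * s ^ (-(α * ρ * ε))) volume 0 1)
    {u : ℝ → V} (hu : u ∈ weightedClosedBall (fun t => t ^ (α * ε)) (Ioc 0 τ) μ) {t : ℝ}
    (ht : t ∈ Ioc 0 τ) : IntervalIntegrable (fun s => R (t - s) (f (u s))) volume 0 t :=
  hR.intervalIntegrable hBint ((hf.continuous hρ.le).comp_continuousOn hu.1)
    (fun _ hs => norm_comp_le_of_mem_weightedClosedBall hρ hc hf hf0 hu hs) ht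

theorem mapsTo_mildMap (hR : IsSmoothingKernel R M (α * (ρ - 1) * ε - 1)) (hρ : 1 < ρ)
    (hc : 0 ≤ c) (hf : PowerLipschitzWith c ρ f) (hf0 : f 0 = 0)
    (hBint : IntervalIntegrable
      (fun s => (1 - s) ^ (α * (ρ - 1) * ε - 1) * s ^ (-(α * ρ * ε))) volume 0 1)
    (hB : B = ∫ s in (0:ℝ)..1, (1 - s) ^ (α * (ρ - 1) * ε - 1) * s ^ (-(α * ρ * ε)))
    (hμ : 0 ≤ μ) (hsmall : M * c * μ ^ (ρ - 1) * B ≤ 1 / 4) (hg : ContinuousOn g (Ioc 0 τ))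
    (hgbdd : ∀ t ∈ Ioc (0:ℝ) τ, t ^ (α * ε) * ‖g t‖ ≤ 3 / 4 * μ) :
    MapsTo (mildMap R f g) (weightedClosedBall (fun t => t ^ (α * ε)) (Ioc 0 τ) μ)
      (weightedClosedBall (fun t => t ^ (α * ε)) (Ioc 0 τ) μ) := by
  intro u hu
  have hfu := fun s (hs : s ∈ Ioc 0 τ) => norm_comp_le_of_mem_weightedClosedBall hρ hc hf hf0 hu hs
  refine ⟨hg.add (hR.continuousOn_integral hBint ((hf.continuous hρ.le).comp_continuousOn hu.1)
    hfu), fun t ht => ?_⟩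
  have hI := hR.norm_integral_le hBint hfu ht
  rw [← hB] at hI
  have hpow : 0 ≤ t ^ (α * ε) := Real.rpow_nonneg ht.1.le _
  calc t ^ (α * ε) * ‖mildMap R f g u t‖
      ≤ t ^ (α * ε) * ‖g t‖ + t ^ (α * ε) * ‖∫ s in (0:ℝ)..t, R (t - s) (f (u s))‖ := by
        rw [← mul_add]; exact mul_le_mul_of_nonneg_left (norm_add_le _ _) hpow
    _ ≤ 3 / 4 * μ + t ^ (α * ε) * (M * (c * μ ^ (ρ - 1) * μ) * B *
          t ^ (α * (ρ - 1) * ε - 1 - α * ρ * ε + 1)) :=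
        add_le_add (hgbdd t ht) (mul_le_mul_of_nonneg_left hI hpow)
    _ = 3 / 4 * μ + M * c * μ ^ (ρ - 1) * B * μ := by
        rw [mul_left_comm, rpow_mul_rpow_kernel_exponent ht.1]; ring
    _ ≤ μ := by nlinarith

theorem mildMap_contraction (hR : IsSmoothingKernel R M (α * (ρ - 1) * ε - 1)) (hρ : 1 < ρ)
    (hc : 0 ≤ c) (hf : PowerLipschitzWith c ρ f) (hf0 : f 0 = 0)
    (hBint : IntervalIntegrable
      (fun s => (1 - s) ^ (α * (ρ - 1) * ε - 1) * s ^ (-(α * ρ * ε))) volume 0 1)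
    (hB : B = ∫ s in (0:ℝ)..1, (1 - s) ^ (α * (ρ - 1) * ε - 1) * s ^ (-(α * ρ * ε)))
    (hsmall : M * c * μ ^ (ρ - 1) * B ≤ 1 / 4) {u v : ℝ → V}
    (hu : u ∈ weightedClosedBall (fun t => t ^ (α * ε)) (Ioc 0 τ) μ)
    (hv : v ∈ weightedClosedBall (fun t => t ^ (α * ε)) (Ioc 0 τ) μ) {d : ℝ}
    (huv : ∀ t ∈ Ioc 0 τ, t ^ (α * ε) * ‖u t - v t‖ ≤ d) {t : ℝ} (ht : t ∈ Ioc 0 τ) :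
    t ^ (α * ε) * ‖mildMap R f g u t - mildMap R f g v t‖ ≤ 1 / 2 * d := by
  have hd : 0 ≤ d := (mul_nonneg (Real.rpow_nonneg ht.1.le _) (norm_nonneg _)).trans (huv t ht)
  have hdiff : mildMap R f g u t - mildMap R f g v t =
      ∫ s in (0:ℝ)..t, R (t - s) (f (u s) - f (v s)) := by
    simp only [mildMap, map_sub]
    rw [add_sub_add_left_eq_sub, intervalIntegral.integral_sub
      (intervalIntegrable_of_mem_weightedClosedBall hR hρ hc hf hf0 hBint hu ht)
      (intervalIntegrable_of_mem_weightedClosedBall hR hρ hc hf hf0 hBint hv ht)]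
  have hI := hR.norm_integral_le hBint (h := fun s => f (u s) - f (v s))
    (fun s hs => norm_comp_sub_comp_le_of_mem_weightedClosedBall hρ.le hc hf hu hv (huv s hs) hs) ht
  rw [← hB] at hI
  calc t ^ (α * ε) * ‖mildMap R f g u t - mildMap R f g v t‖
      ≤ t ^ (α * ε) * (M * (2 * c * μ ^ (ρ - 1) * d) * B *
          t ^ (α * (ρ - 1) * ε - 1 - α * ρ * ε + 1)) := by
        rw [hdiff]; exact mul_le_mul_of_nonneg_left hI (Real.rpow_nonneg ht.1.le _)
    _ = 2 * (M * c * μ ^ (ρ - 1) * B) * d := by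
        rw [mul_left_comm, rpow_mul_rpow_kernel_exponent ht.1]; ring
    _ ≤ 1 / 2 * d := by nlinarith

end MildSolution

theorem local_fixed_point_general
    {V W : Type*} [NormedAddCommGroup V] [NormedSpace ℝ V] [CompleteSpace V]
    [NormedAddCommGroup W] [NormedSpace ℝ W]
    (ρ α ε M c B : ℝ)
    (hρ : 1 < ρ)
    (hM : 0 < M) (hc : 0 < c)
    (R : ℝ → W →L[ℝ] V)
    (hRcont : ∀ w : W, ContinuousOn (fun t => R t w) (Ioi (0:ℝ)))
    (hRbound : ∀ t > (0:ℝ), ∀ w : W, ‖R t w‖ ≤ M * t ^ (α * (ρ - 1) * ε - 1) * ‖w‖)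
    (f : V → W) (hf0 : f 0 = 0)
    (hf : ∀ x y : V, ‖f x - f y‖ ≤ c * (‖x‖ ^ (ρ - 1) + ‖y‖ ^ (ρ - 1)) * ‖x - y‖)
    (hBint : IntervalIntegrable
      (fun s => (1 - s) ^ (α * (ρ - 1) * ε - 1) * s ^ (-(α * ρ * ε))) volume 0 1)
    (hB : B = ∫ s in (0:ℝ)..1, (1 - s) ^ (α * (ρ - 1) * ε - 1) * s ^ (-(α * ρ * ε)))
    (μ : ℝ) (hμ : 0 < μ) (hsmall : M * c * μ ^ (ρ - 1) * B ≤ 1 / 4)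
    (τ : ℝ)
    (g : ℝ → V) (hg : ContinuousOn g (Ioc 0 τ))
    (hgbdd : ∀ t ∈ Ioc (0:ℝ) τ, t ^ (α * ε) * ‖g t‖ ≤ 3 / 4 * μ) :
    ∃ u : ℝ → V,
      (IsMildSolutionOn R f g u (Ioc 0 τ) ∧
        ∀ t ∈ Ioc (0:ℝ) τ, t ^ (α * ε) * ‖u t‖ ≤ μ) ∧
      ∀ v : ℝ → V,
        (IsMildSolutionOn R f g v (Ioc 0 τ) ∧
          ∀ t ∈ Ioc (0:ℝ) τ, t ^ (α * ε) * ‖v t‖ ≤ μ) →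
        EqOn v u (Ioc 0 τ) := by
  have hR : IsSmoothingKernel R M (α * (ρ - 1) * ε - 1) := ⟨hRcont, hRbound, hM.le⟩
  obtain ⟨u, hu, hfix, huniq⟩ := exists_fixedPoint_of_weighted_contraction
    (continuousOn_id.rpow_const fun t ht => Or.inl ht.1.ne')
    (fun t ht => Real.rpow_pos_of_pos ht.1 _) hμ.le (K := 1 / 2) (by norm_num)
    (mapsTo_mildMap hR hρ hc.le hf hf0 hBint hB hμ.le hsmall hg hgbdd)
    (fun u hu v hv d huv t ht => by
      simpa using mildMap_contraction hR hρ hc.le hf hf0 hBint hB hsmall hu hv huv ht)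
  refine ⟨u, ⟨⟨hu.1, fun t ht => ⟨?_, (hfix ht).symm⟩⟩, hu.2⟩, ?_⟩
  · exact intervalIntegrable_of_mem_weightedClosedBall hR hρ hc.le hf hf0 hBint hu ht
  · rintro v ⟨⟨hvc, hvsol⟩, hvb⟩
    exact huniq v ⟨hvc, hvb⟩ fun t ht => (hvsol t ht).2.symm

/-- **Part 1 of Theorem 1.1 (fixed-point core, local existence and uniqueness).**
Under the abstract setting, if `M c μ^{ρ-1} B ≤ 1/4` and `g : (0,τ] → V` is continuous with
`t^{αε} ‖g t‖ ≤ (3/4) μ`, there is exactly one continuous `u : (0,τ] → V` with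
`sup t^{αε} ‖u t‖ ≤ μ` which is a mild solution with forcing `g` on `(0,τ]`. -/
theorem local_fixed_point
    {V W : Type*} [NormedAddCommGroup V] [NormedSpace ℝ V] [CompleteSpace V]
    [NormedAddCommGroup W] [NormedSpace ℝ W] [CompleteSpace W]
    (ρ α ε M c B : ℝ)
    (hρ : 1 < ρ) (hα : 1 < α) (hε : 0 < ε) (hαρε : α * ρ * ε < 1)
    (hM : 0 < M) (hc : 0 < c)
    (R : ℝ → W →L[ℝ] V)
    (hRcont : ∀ w : W, ContinuousOn (fun t => R t w) (Ioi (0:ℝ)))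
    (hRbound : ∀ t > (0:ℝ), ∀ w : W, ‖R t w‖ ≤ M * t ^ (α * (ρ - 1) * ε - 1) * ‖w‖)
    (f : V → W) (hf0 : f 0 = 0)
    (hf : ∀ x y : V, ‖f x - f y‖ ≤ c * (‖x‖ ^ (ρ - 1) + ‖y‖ ^ (ρ - 1)) * ‖x - y‖)
    (hBint : IntervalIntegrable
      (fun s => (1 - s) ^ (α * (ρ - 1) * ε - 1) * s ^ (-(α * ρ * ε))) volume 0 1)
    (hB : B = ∫ s in (0:ℝ)..1, (1 - s) ^ (α * (ρ - 1) * ε - 1) * s ^ (-(α * ρ * ε)))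
    (μ : ℝ) (hμ : 0 < μ) (hsmall : M * c * μ ^ (ρ - 1) * B ≤ 1 / 4)
    (τ : ℝ) (hτ : 0 < τ)
    (g : ℝ → V) (hg : ContinuousOn g (Ioc 0 τ))
    (hgbdd : ∀ t ∈ Ioc (0:ℝ) τ, t ^ (α * ε) * ‖g t‖ ≤ 3 / 4 * μ) :
    ∃ u : ℝ → V,
      (IsMildSolutionOn R f g u (Ioc 0 τ) ∧
        ∀ t ∈ Ioc (0:ℝ) τ, t ^ (α * ε) * ‖u t‖ ≤ μ) ∧
      ∀ v : ℝ → V,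
        (IsMildSolutionOn R f g v (Ioc 0 τ) ∧
          ∀ t ∈ Ioc (0:ℝ) τ, t ^ (α * ε) * ‖v t‖ ≤ μ) →
        EqOn v u (Ioc 0 τ) :=
  local_fixed_point_general ρ α ε M c B hρ hM hc R hRcont hRbound f hf0 hf hBint hB μ hμ hsmall τ g
    hg hgbdd
end

section
/- Assume the abstract setting described in the context. Let μ > 0 satisfy M·c·μ^{ρ−1}·B ≤ 1/4, let τ ∈ (0,∞), let g : (0,τ] → V be continuous with t^{αε}‖g(t)‖_V ≤ (3/4)μ for all t ∈ (0,τ], and let u : (0,τ] → V be a mild solution with forcing g on (0,τ] satisfying sup_{t∈(0,τ]} t^{αε}‖u(t)‖_V ≤ μ. Then sup_{0<s≤t} s^{αε}‖u(s)‖_V ≤ (4/3) · sup_{0<s≤t} s^{αε}‖g(s)‖_V for every t ∈ (0,τ]; in particular, if lim_{t→0⁺} t^{αε}‖g(t)‖_V = 0, then lim_{t→0⁺} t^{αε}‖u(t)‖_V = 0. -/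
open MeasureTheory Set Filter Topology intervalIntegral
open scoped ENNReal

/-!
Write `K t = sup_{0<s≤t} s^{αε} ‖u s‖` and `G t` for the same supremum for `g`. Of the two
factors in `‖f (u s)‖ ≤ c ‖u s‖^{ρ-1} ‖u s‖`, bound the first by the a priori bound `μ s^{-αε}`
and the second by `K t s^{-αε}`. With the kernel bound the Duhamel integral becomes the Beta
integral `B` rescaled to `[0, t]`, and the exponents are such that all powers of `t` cancel:
`t^{αε} ‖u t‖ ≤ t^{αε} ‖g t‖ + M c μ^{ρ-1} B · K t ≤ t^{αε} ‖g t‖ + K t / 4`.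
Taking suprema, `K ≤ G + K / 4`, so `K ≤ (4/3) G`; and `G t → 0` as `t → 0⁺` once
`t^{αε} ‖g t‖ → 0`.
-/

theorem sub_rpow_mul_rpow_eq {s t : ℝ} (ht : 0 < t) (hs : 0 ≤ s) (hst : s ≤ t) (p q : ℝ) :
    (t - s) ^ p * s ^ q = t ^ (p + q) * ((1 - s / t) ^ p * (s / t) ^ q) := by
  have h1 : 0 ≤ 1 - s / t := by rw [sub_nonneg, div_le_one ht]; exact hst
  have h2 : 0 ≤ s / t := div_nonneg hs ht.le
  rw [Real.rpow_add ht, mul_mul_mul_comm, ← Real.mul_rpow ht.le h1, ← Real.mul_rpow ht.le h2,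
    mul_sub, mul_one, mul_div_cancel₀ _ ht.ne']

theorem norm_integral_le_of_norm_le_beta_kernel {E : Type*} [NormedAddCommGroup E]
    [NormedSpace ℝ E] {F : ℝ → E} {C p q t : ℝ} (ht : 0 < t)
    (hint : IntervalIntegrable (fun x => (1 - x) ^ p * x ^ q) volume 0 1)
    (hF : ∀ s ∈ Ioo 0 t, ‖F s‖ ≤ C * ((t - s) ^ p * s ^ q)) :
    ‖∫ s in 0..t, F s‖ ≤ C * t ^ (p + q + 1) * ∫ x in 0..1, (1 - x) ^ p * x ^ q := by
  set φ : ℝ → ℝ := fun x => (1 - x) ^ p * x ^ q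
  have hscaled : IntervalIntegrable (fun s => C * t ^ (p + q) * φ (s / t)) volume 0 t := by
    have h := (hint.comp_mul_left (c := t⁻¹)).const_mul (C * t ^ (p + q))
    simpa [div_eq_inv_mul, ht.ne'] using h
  have hbound : ∀ᵐ s, s ∈ Ioc 0 t → ‖F s‖ ≤ C * t ^ (p + q) * φ (s / t) := by
    filter_upwards [(Ioo_ae_eq_Ioc (μ := volume) (a := (0 : ℝ)) (b := t)).mem_iff]
      with s hs hsIoc
    have hsIoo := hs.2 hsIoc
    rw [mul_assoc, ← sub_rpow_mul_rpow_eq ht hsIoo.1.le hsIoo.2.le]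
    exact hF s hsIoo
  calc ‖∫ s in 0..t, F s‖ ≤ ∫ s in 0..t, C * t ^ (p + q) * φ (s / t) :=
        norm_integral_le_of_norm_le ht.le hbound hscaled
    _ = C * t ^ (p + q + 1) * ∫ x in 0..1, φ x := by
        rw [intervalIntegral.integral_const_mul, intervalIntegral.integral_comp_div φ ht.ne',
          zero_div, div_self ht.ne', smul_eq_mul, Real.rpow_add_one ht.ne']
        ring

theorem norm_le_mul_rpow_neg_of_rpow_mul_norm_le {E : Type*} [SeminormedAddCommGroup E] {x : E}
    {s β L : ℝ} (hs : 0 < s) (h : s ^ β * ‖x‖ ≤ L) : ‖x‖ ≤ L * s ^ (-β) := by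
  rwa [Real.rpow_neg hs.le, ← div_eq_mul_inv, le_div_iff₀ (Real.rpow_pos_of_pos hs β), mul_comm]

theorem norm_apply_le_of_norm_sub_apply_le {E F : Type*} [SeminormedAddCommGroup E]
    [SeminormedAddCommGroup F] {f : E → F} {c ρ : ℝ} (hρ : 1 < ρ) (hf0 : f 0 = 0)
    (hf : ∀ x y : E, ‖f x - f y‖ ≤ c * (‖x‖ ^ (ρ - 1) + ‖y‖ ^ (ρ - 1)) * ‖x - y‖) (x : E) :
    ‖f x‖ ≤ c * ‖x‖ ^ (ρ - 1) * ‖x‖ := by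
  simpa [hf0, Real.zero_rpow (sub_pos.2 hρ).ne'] using hf x 0

theorem sSup_image_Ioc_le_of_le_add_mul_sSup {φ ψ : ℝ → ℝ} {t κ : ℝ} (ht : 0 < t)
    (hκ₀ : 0 ≤ κ) (hκ₁ : κ < 1) (hφ : BddAbove (φ '' Ioc 0 t)) (hψ : BddAbove (ψ '' Ioc 0 t))
    (h : ∀ s ∈ Ioc 0 t, φ s ≤ ψ s + κ * sSup (φ '' Ioc 0 s)) :
    sSup (φ '' Ioc 0 t) ≤ (1 - κ)⁻¹ * sSup (ψ '' Ioc 0 t) := by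
  have hle : sSup (φ '' Ioc 0 t) ≤ sSup (ψ '' Ioc 0 t) + κ * sSup (φ '' Ioc 0 t) := by
    refine csSup_le ((nonempty_Ioc.2 ht).image φ) ?_
    rintro _ ⟨s, hs, rfl⟩
    have hsup_mono : sSup (φ '' Ioc 0 s) ≤ sSup (φ '' Ioc 0 t) :=
      csSup_le_csSup hφ ((nonempty_Ioc.2 hs.1).image φ) (image_mono (Ioc_subset_Ioc_right hs.2))
    calc φ s ≤ ψ s + κ * sSup (φ '' Ioc 0 s) := h s hs
      _ ≤ sSup (ψ '' Ioc 0 t) + κ * sSup (φ '' Ioc 0 t) := by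
          gcongr
          exact le_csSup hψ (mem_image_of_mem ψ hs)
  rw [inv_mul_eq_div, le_div_iff₀ (sub_pos.2 hκ₁)]
  linarith

theorem tendsto_sSup_image_Ioc_nhdsGT_zero {ψ : ℝ → ℝ} (hψ : Tendsto ψ (𝓝[>] 0) (𝓝 0)) :
    Tendsto (fun t => sSup (ψ '' Ioc 0 t)) (𝓝[>] 0) (𝓝 0) := by
  rw [(nhdsGT_basis 0).tendsto_iff Metric.nhds_basis_closedBall] at hψ ⊢
  intro r hr
  obtain ⟨δ, hδ, hψδ⟩ := hψ r hr
  refine ⟨δ, hδ, fun t ht => ?_⟩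
  have hsub : ψ '' Ioc 0 t ⊆ Icc (-r) r := by
    rintro _ ⟨s, hs, rfl⟩
    have := hψδ s ⟨hs.1, hs.2.trans_lt ht.2⟩
    rwa [Metric.mem_closedBall, Real.dist_eq, sub_zero, abs_le] at this
  have hψt : ψ t ∈ ψ '' Ioc 0 t := mem_image_of_mem ψ (right_mem_Ioc.2 ht.1)
  rw [Metric.mem_closedBall, Real.dist_eq, sub_zero, abs_le]
  exact ⟨(hsub hψt).1.trans (le_csSup ⟨r, fun _ hy => (hsub hy).2⟩ hψt),
    csSup_le ⟨_, hψt⟩ fun _ hy => (hsub hy).2⟩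

theorem tendsto_nhdsGT_zero_of_le_mul_sSup {φ ψ : ℝ → ℝ} {C τ : ℝ} (hτ : 0 < τ)
    (hφ₀ : ∀ t ∈ Ioc 0 τ, 0 ≤ φ t) (hφ : ∀ t ∈ Ioc 0 τ, φ t ≤ C * sSup (ψ '' Ioc 0 t))
    (hψ : Tendsto ψ (𝓝[>] 0) (𝓝 0)) : Tendsto φ (𝓝[>] 0) (𝓝 0) := by
  have hupper := (tendsto_sSup_image_Ioc_nhdsGT_zero hψ).const_mul C
  rw [mul_zero] at hupper
  exact tendsto_of_tendsto_of_tendsto_of_le_of_le' tendsto_const_nhds hupper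
    (eventually_of_mem (Ioc_mem_nhdsGT hτ) hφ₀) (eventually_of_mem (Ioc_mem_nhdsGT hτ) hφ)

section

variable {V W : Type*} [NormedAddCommGroup V] [NormedSpace ℝ V]
  [NormedAddCommGroup W] [NormedSpace ℝ W]

theorem norm_apply_le_of_rpow_mul_norm_le {R : ℝ → W →L[ℝ] V} {f : V → W} {x : V}
    {M c ρ a β μ K s t : ℝ} (hM : 0 ≤ M) (hc : 0 ≤ c) (hρ : 1 ≤ ρ) (hμ : 0 ≤ μ)
    (hR : ∀ t > 0, ∀ w, ‖R t w‖ ≤ M * t ^ a * ‖w‖)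
    (hf : ∀ x, ‖f x‖ ≤ c * ‖x‖ ^ (ρ - 1) * ‖x‖)
    (hs : 0 < s) (hst : s < t) (hxμ : s ^ β * ‖x‖ ≤ μ) (hxK : s ^ β * ‖x‖ ≤ K) :
    ‖R (t - s) (f x)‖ ≤ M * c * μ ^ (ρ - 1) * K * ((t - s) ^ a * s ^ (-(β * ρ))) := by
  have hw : 0 ≤ s ^ (-β) := Real.rpow_nonneg hs.le _
  have hfx : ‖f x‖ ≤ c * μ ^ (ρ - 1) * K * s ^ (-(β * ρ)) :=
    calc ‖f x‖ ≤ c * ‖x‖ ^ (ρ - 1) * ‖x‖ := hf x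
      _ ≤ c * (μ * s ^ (-β)) ^ (ρ - 1) * (K * s ^ (-β)) := by
          gcongr
          · exact norm_le_mul_rpow_neg_of_rpow_mul_norm_le hs hxμ
          · exact norm_le_mul_rpow_neg_of_rpow_mul_norm_le hs hxK
      _ = c * μ ^ (ρ - 1) * K * s ^ (-(β * ρ)) := by
          rw [Real.mul_rpow hμ hw, ← Real.rpow_mul hs.le,
            show -(β * ρ) = -β * (ρ - 1) + -β by ring, Real.rpow_add hs]
          ring
  calc ‖R (t - s) (f x)‖ ≤ M * (t - s) ^ a * ‖f x‖ := hR _ (sub_pos.2 hst) _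
    _ ≤ M * (t - s) ^ a * (c * μ ^ (ρ - 1) * K * s ^ (-(β * ρ))) := by
        gcongr
    _ = M * c * μ ^ (ρ - 1) * K * ((t - s) ^ a * s ^ (-(β * ρ))) := by ring

theorem rpow_mul_norm_integral_le {R : ℝ → W →L[ℝ] V} {f : V → W} {u : ℝ → V}
    {M c ρ a β μ K t : ℝ} (hM : 0 ≤ M) (hc : 0 ≤ c) (hρ : 1 ≤ ρ) (hμ : 0 ≤ μ)
    (ha : a = β * (ρ - 1) - 1)
    (hR : ∀ t > 0, ∀ w, ‖R t w‖ ≤ M * t ^ a * ‖w‖)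
    (hf : ∀ x, ‖f x‖ ≤ c * ‖x‖ ^ (ρ - 1) * ‖x‖)
    (hint : IntervalIntegrable (fun x => (1 - x) ^ a * x ^ (-(β * ρ))) volume 0 1)
    (ht : 0 < t) (huμ : ∀ s ∈ Ioo 0 t, s ^ β * ‖u s‖ ≤ μ)
    (huK : ∀ s ∈ Ioo 0 t, s ^ β * ‖u s‖ ≤ K) :
    t ^ β * ‖∫ s in 0..t, R (t - s) (f (u s))‖ ≤
      M * c * μ ^ (ρ - 1) * (∫ x in 0..1, (1 - x) ^ a * x ^ (-(β * ρ))) * K := by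
  have hint_le := norm_integral_le_of_norm_le_beta_kernel ht hint fun s hs =>
    norm_apply_le_of_rpow_mul_norm_le hM hc hρ hμ hR hf hs.1 hs.2 (huμ s hs) (huK s hs)
  have hpow : t ^ β * t ^ (a + -(β * ρ) + 1) = 1 := by
    rw [← Real.rpow_add ht, show β + (a + -(β * ρ) + 1) = 0 by rw [ha]; ring, Real.rpow_zero]
  calc t ^ β * ‖∫ s in 0..t, R (t - s) (f (u s))‖
      ≤ t ^ β * (M * c * μ ^ (ρ - 1) * K * t ^ (a + -(β * ρ) + 1) *
          ∫ x in 0..1, (1 - x) ^ a * x ^ (-(β * ρ))) := by gcongr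
    _ = M * c * μ ^ (ρ - 1) * (∫ x in 0..1, (1 - x) ^ a * x ^ (-(β * ρ))) * K *
          (t ^ β * t ^ (a + -(β * ρ) + 1)) := by ring
    _ = _ := by rw [hpow, mul_one]

theorem rpow_mul_norm_le_of_eq_add_integral {R : ℝ → W →L[ℝ] V} {f : V → W} {g u : ℝ → V}
    {M c ρ a β μ K t : ℝ} (hM : 0 ≤ M) (hc : 0 ≤ c) (hρ : 1 ≤ ρ) (hμ : 0 ≤ μ)
    (ha : a = β * (ρ - 1) - 1)
    (hR : ∀ t > 0, ∀ w, ‖R t w‖ ≤ M * t ^ a * ‖w‖)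
    (hf : ∀ x, ‖f x‖ ≤ c * ‖x‖ ^ (ρ - 1) * ‖x‖)
    (hint : IntervalIntegrable (fun x => (1 - x) ^ a * x ^ (-(β * ρ))) volume 0 1)
    (ht : 0 < t) (hu : u t = g t + ∫ s in 0..t, R (t - s) (f (u s)))
    (huμ : ∀ s ∈ Ioo 0 t, s ^ β * ‖u s‖ ≤ μ) (huK : ∀ s ∈ Ioo 0 t, s ^ β * ‖u s‖ ≤ K) :
    t ^ β * ‖u t‖ ≤
      t ^ β * ‖g t‖ + M * c * μ ^ (ρ - 1) * (∫ x in 0..1, (1 - x) ^ a * x ^ (-(β * ρ))) * K :=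
  calc t ^ β * ‖u t‖ ≤ t ^ β * (‖g t‖ + ‖∫ s in 0..t, R (t - s) (f (u s))‖) := by
        rw [hu]; gcongr; exact norm_add_le _ _
    _ = t ^ β * ‖g t‖ + t ^ β * ‖∫ s in 0..t, R (t - s) (f (u s))‖ := mul_add _ _ _
    _ ≤ _ := add_le_add_right
        (rpow_mul_norm_integral_le hM hc hρ hμ ha hR hf hint ht huμ huK) _

end

theorem weighted_smallness_general
    {V W : Type*} [NormedAddCommGroup V] [NormedSpace ℝ V]
    [NormedAddCommGroup W] [NormedSpace ℝ W]
    (ρ α ε M c B : ℝ)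
    (hρ : 1 < ρ)
    (hM : 0 < M) (hc : 0 < c)
    (R : ℝ → W →L[ℝ] V)
    (hRbound : ∀ t > (0:ℝ), ∀ w : W, ‖R t w‖ ≤ M * t ^ (α * (ρ - 1) * ε - 1) * ‖w‖)
    (f : V → W) (hf0 : f 0 = 0)
    (hf : ∀ x y : V, ‖f x - f y‖ ≤ c * (‖x‖ ^ (ρ - 1) + ‖y‖ ^ (ρ - 1)) * ‖x - y‖)
    (hBint : IntervalIntegrable
      (fun s => (1 - s) ^ (α * (ρ - 1) * ε - 1) * s ^ (-(α * ρ * ε))) volume 0 1)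
    (hB : B = ∫ s in (0:ℝ)..1, (1 - s) ^ (α * (ρ - 1) * ε - 1) * s ^ (-(α * ρ * ε)))
    (μ : ℝ) (hμ : 0 < μ) (hsmall : M * c * μ ^ (ρ - 1) * B ≤ 1 / 4)
    (τ : ℝ) (hτ : 0 < τ)
    (g : ℝ → V)
    (hgbdd : ∀ t ∈ Ioc (0:ℝ) τ, t ^ (α * ε) * ‖g t‖ ≤ 3 / 4 * μ)
    (u : ℝ → V) (hu : IsMildSolutionOn R f g u (Ioc 0 τ))
    (hubdd : ∀ t ∈ Ioc (0:ℝ) τ, t ^ (α * ε) * ‖u t‖ ≤ μ) :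
    (∀ t ∈ Ioc (0:ℝ) τ,
      sSup ((fun s => s ^ (α * ε) * ‖u s‖) '' Ioc 0 t) ≤
        4 / 3 * sSup ((fun s => s ^ (α * ε) * ‖g s‖) '' Ioc 0 t)) ∧
    (Tendsto (fun t => t ^ (α * ε) * ‖g t‖) (𝓝[>] 0) (𝓝 0) →
      Tendsto (fun t => t ^ (α * ε) * ‖u t‖) (𝓝[>] 0) (𝓝 0)) := by
  set φ : ℝ → ℝ := fun s => s ^ (α * ε) * ‖u s‖
  set ψ : ℝ → ℝ := fun s => s ^ (α * ε) * ‖g s‖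
  have hφ₀ : ∀ t ∈ Ioc (0:ℝ) τ, 0 ≤ φ t := fun t ht =>
    mul_nonneg (Real.rpow_nonneg ht.1.le _) (norm_nonneg _)
  have hφbdd : ∀ t ≤ τ, BddAbove (φ '' Ioc 0 t) := fun t ht =>
    ⟨μ, by rintro _ ⟨s, hs, rfl⟩; exact hubdd s ⟨hs.1, hs.2.trans ht⟩⟩
  have hψbdd : ∀ t ≤ τ, BddAbove (ψ '' Ioc 0 t) := fun t ht =>
    ⟨3 / 4 * μ, by rintro _ ⟨s, hs, rfl⟩; exact hgbdd s ⟨hs.1, hs.2.trans ht⟩⟩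
  have hφ_le_sSup : ∀ t ∈ Ioc (0:ℝ) τ, φ t ≤ sSup (φ '' Ioc 0 t) := fun t ht =>
    le_csSup (hφbdd t ht.2) (mem_image_of_mem φ (right_mem_Ioc.2 ht.1))
  rw [show α * ρ * ε = α * ε * ρ by ring] at hBint hB
  have hest : ∀ t ∈ Ioc (0:ℝ) τ, φ t ≤ ψ t + 1 / 4 * sSup (φ '' Ioc 0 t) := fun t ht =>
    (rpow_mul_norm_le_of_eq_add_integral hM.le hc.le hρ.le hμ.le (by ring) hRbound
      (norm_apply_le_of_norm_sub_apply_le hρ hf0 hf) hBint ht.1 (hu.2 t ht).2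
      (fun s hs => hubdd s ⟨hs.1, hs.2.le.trans ht.2⟩)
      (fun s hs => le_csSup (hφbdd t ht.2) (mem_image_of_mem φ (Ioo_subset_Ioc_self hs)))).trans
    (by rw [← hB]; gcongr; exact (hφ₀ t ht).trans (hφ_le_sSup t ht))
  have hsup : ∀ t ∈ Ioc (0:ℝ) τ, sSup (φ '' Ioc 0 t) ≤ 4 / 3 * sSup (ψ '' Ioc 0 t) := by
    intro t ht
    convert sSup_image_Ioc_le_of_le_add_mul_sSup ht.1 (by norm_num) (by norm_num)
      (hφbdd t ht.2) (hψbdd t ht.2) fun s hs => hest s ⟨hs.1, hs.2.trans ht.2⟩ using 2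
    norm_num
  exact ⟨hsup, tendsto_nhdsGT_zero_of_le_mul_sSup hτ hφ₀ fun t ht =>
    (hφ_le_sSup t ht).trans (hsup t ht)⟩

/-- **Weighted smallness estimate of Theorem 1.1(A).**
If `u` is a mild solution with forcing `g` on `(0,τ]` with `t^{αε}‖g t‖ ≤ (3/4)μ` and
`sup t^{αε}‖u t‖ ≤ μ`, then for every `t ∈ (0,τ]`,
`sup_{0<s≤t} s^{αε}‖u s‖ ≤ (4/3) sup_{0<s≤t} s^{αε}‖g s‖`; in particular if
`t^{αε}‖g t‖ → 0` as `t → 0⁺` then `t^{αε}‖u t‖ → 0` as `t → 0⁺`. -/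
theorem weighted_smallness
    {V W : Type*} [NormedAddCommGroup V] [NormedSpace ℝ V] [CompleteSpace V]
    [NormedAddCommGroup W] [NormedSpace ℝ W] [CompleteSpace W]
    (ρ α ε M c B : ℝ)
    (hρ : 1 < ρ) (hα : 1 < α) (hε : 0 < ε) (hαρε : α * ρ * ε < 1)
    (hM : 0 < M) (hc : 0 < c)
    (R : ℝ → W →L[ℝ] V)
    (hRcont : ∀ w : W, ContinuousOn (fun t => R t w) (Ioi (0:ℝ)))
    (hRbound : ∀ t > (0:ℝ), ∀ w : W, ‖R t w‖ ≤ M * t ^ (α * (ρ - 1) * ε - 1) * ‖w‖)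
    (f : V → W) (hf0 : f 0 = 0)
    (hf : ∀ x y : V, ‖f x - f y‖ ≤ c * (‖x‖ ^ (ρ - 1) + ‖y‖ ^ (ρ - 1)) * ‖x - y‖)
    (hBint : IntervalIntegrable
      (fun s => (1 - s) ^ (α * (ρ - 1) * ε - 1) * s ^ (-(α * ρ * ε))) volume 0 1)
    (hB : B = ∫ s in (0:ℝ)..1, (1 - s) ^ (α * (ρ - 1) * ε - 1) * s ^ (-(α * ρ * ε)))
    (μ : ℝ) (hμ : 0 < μ) (hsmall : M * c * μ ^ (ρ - 1) * B ≤ 1 / 4)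
    (τ : ℝ) (hτ : 0 < τ)
    (g : ℝ → V) (hg : ContinuousOn g (Ioc 0 τ))
    (hgbdd : ∀ t ∈ Ioc (0:ℝ) τ, t ^ (α * ε) * ‖g t‖ ≤ 3 / 4 * μ)
    (u : ℝ → V) (hu : IsMildSolutionOn R f g u (Ioc 0 τ))
    (hubdd : ∀ t ∈ Ioc (0:ℝ) τ, t ^ (α * ε) * ‖u t‖ ≤ μ) :
    (∀ t ∈ Ioc (0:ℝ) τ,
      sSup ((fun s => s ^ (α * ε) * ‖u s‖) '' Ioc 0 t) ≤
        4 / 3 * sSup ((fun s => s ^ (α * ε) * ‖g s‖) '' Ioc 0 t)) ∧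
    (Tendsto (fun t => t ^ (α * ε) * ‖g t‖) (𝓝[>] 0) (𝓝 0) →
      Tendsto (fun t => t ^ (α * ε) * ‖u t‖) (𝓝[>] 0) (𝓝 0)) :=
  weighted_smallness_general ρ α ε M c B hρ hM hc R hRbound f hf0 hf hBint hB μ hμ hsmall τ hτ g
    hgbdd u hu hubdd
end

section
/- Assume the abstract setting described in the context. Let 0 < τ₀ < τ', let g : (0,τ'] → V be continuous, and let u, v : (0,τ'] → V both be mild solutions with forcing g on (0,τ'] such that u(t) = v(t) for all t ∈ (0,τ₀]. Then u(t) = v(t) for all t ∈ (0,τ']. -/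
/-!
Write `w = u - v` and `β = α(ρ-1)ε`. Subtracting the two integral equations and using `u = v` on
`(0, τ₀]` gives the singular Grönwall inequality `‖w t‖ ≤ K ∫_{τ₀}^t (t-s)^(β-1) ‖w s‖ ds` on
`[τ₀, τ']`, where `K` absorbs the bound of `u` and `v` on that compact interval. It forces `w = 0`:
in the weighted norm `sup e^(-rt) ‖w t‖` the right-hand side is at most `K Γ(β) / r^β` times the
left-hand side, and this factor is below `1` once `r` is large.
-/

open MeasureTheory Set Filter Topology intervalIntegral
open scoped ENNReal

open Real

theorem intervalIntegrable_sub_rpow {β : ℝ} (hβ : 0 < β) (a t : ℝ) :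
    IntervalIntegrable (fun s => (t - s) ^ (β - 1)) volume a t := by
  simpa using (intervalIntegrable_rpow' (a := t - a) (b := t - t)
    (by linarith : -1 < β - 1)).comp_sub_left t

theorem integral_rpow_mul_exp_neg_mul_le {β r x : ℝ} (hβ : 0 < β) (hr : 0 < r) (hx : 0 ≤ x) :
    ∫ s in (0:ℝ)..x, s ^ (β - 1) * exp (-(r * s)) ≤ Gamma β / r ^ β := by
  have hscale : Gamma β / r ^ β = (1 / r) ^ β * Gamma β := by
    rw [div_rpow zero_le_one hr.le, one_rpow, one_div_mul_eq_div]
  rw [hscale, ← integral_rpow_mul_exp_neg_mul_Ioi hβ hr, integral_of_le hx]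
  refine setIntegral_mono_set ?_ ?_ Ioc_subset_Ioi_self.eventuallyLE
  · simpa [neg_mul] using
      integrableOn_rpow_mul_exp_neg_mul_rpow (by linarith : -1 < β - 1) one_pos hr
  · filter_upwards [ae_restrict_mem measurableSet_Ioi] with s hs
    exact mul_nonneg (rpow_nonneg hs.le _) (exp_pos _).le

theorem integral_sub_rpow_mul_exp_le {β r a t : ℝ} (hβ : 0 < β) (hr : 0 < r) (hat : a ≤ t) :
    ∫ s in a..t, (t - s) ^ (β - 1) * exp (r * s) ≤ exp (r * t) * (Gamma β / r ^ β) := by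
  have hsplit : ∀ s, (t - s) ^ (β - 1) * exp (r * s)
      = exp (r * t) * ((t - s) ^ (β - 1) * exp (-(r * (t - s)))) := by
    intro s
    rw [mul_left_comm, ← exp_add]
    ring_nf
  simp_rw [hsplit, intervalIntegral.integral_const_mul,
    integral_comp_sub_left (fun s => s ^ (β - 1) * exp (-(r * s))) t, sub_self]
  exact mul_le_mul_of_nonneg_left (integral_rpow_mul_exp_neg_mul_le hβ hr (by linarith))
    (exp_pos _).le

theorem exists_pos_mul_gamma_div_rpow_lt_one {β : ℝ} (hβ : 0 < β) (K : ℝ) :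
    ∃ r > 0, K * (Gamma β / r ^ β) < 1 := by
  have hlim : Tendsto (fun r : ℝ => K * (Gamma β / r ^ β)) atTop (𝓝 0) := by
    simpa using (tendsto_const_nhds.div_atTop (tendsto_rpow_atTop hβ)).const_mul K
  exact ((eventually_gt_atTop 0).and (hlim.eventually (gt_mem_nhds one_pos))).exists

theorem eqOn_zero_of_le_mul_integral_sub_rpow {φ : ℝ → ℝ} {a b K β : ℝ} (hβ : 0 < β)
    (hK : 0 ≤ K) (hφ : ContinuousOn φ (Icc a b)) (hφ₀ : ∀ t ∈ Icc a b, 0 ≤ φ t)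
    (h : ∀ t ∈ Icc a b, φ t ≤ K * ∫ s in a..t, (t - s) ^ (β - 1) * φ s) :
    EqOn φ 0 (Icc a b) := by
  rcases (Icc a b).eq_empty_or_nonempty with hempty | hne
  · simp [hempty]
  obtain ⟨r, hr, hrK⟩ := exists_pos_mul_gamma_div_rpow_lt_one hβ K
  obtain ⟨t₀, ht₀, hmax⟩ :=
    isCompact_Icc.exists_isMaxOn (f := fun t => exp (-(r * t)) * φ t) hne
      ((by fun_prop : Continuous fun t => exp (-(r * t))).continuousOn.mul hφ)
  set P := exp (-(r * t₀)) * φ t₀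
  have hP₀ : 0 ≤ P := mul_nonneg (exp_pos _).le (hφ₀ t₀ ht₀)
  have hφP : ∀ s ∈ Icc a b, φ s ≤ P * exp (r * s) := by
    intro s hs
    have : exp (-(r * s)) * φ s ≤ P := hmax hs
    rwa [exp_neg, inv_mul_le_iff₀ (exp_pos _), mul_comm] at this
  have hat₀ : a ≤ t₀ := ht₀.1
  have hsub : uIcc a t₀ ⊆ Icc a b := by
    rw [uIcc_of_le hat₀]; exact Icc_subset_Icc_right ht₀.2
  have hPP : P ≤ K * (Gamma β / r ^ β) * P := by
    have hint := intervalIntegrable_sub_rpow hβ a t₀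
    calc P = exp (-(r * t₀)) * φ t₀ := rfl
      _ ≤ exp (-(r * t₀)) * (K * ∫ s in a..t₀, (t₀ - s) ^ (β - 1) * (P * exp (r * s))) := by
        refine mul_le_mul_of_nonneg_left
          ((h t₀ ht₀).trans (mul_le_mul_of_nonneg_left ?_ hK)) (exp_pos _).le
        refine integral_mono_on hat₀ (hint.mul_continuousOn (hφ.mono hsub))
          (hint.mul_continuousOn (by fun_prop)) fun s hs => ?_
        exact mul_le_mul_of_nonneg_left (hφP s (hsub (uIcc_of_le hat₀ ▸ hs)))
          (rpow_nonneg (sub_nonneg.2 hs.2) _)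
      _ = exp (-(r * t₀)) * K * P * ∫ s in a..t₀, (t₀ - s) ^ (β - 1) * exp (r * s) := by
        simp_rw [mul_left_comm _ P, intervalIntegral.integral_const_mul]; ring
      _ ≤ exp (-(r * t₀)) * K * P * (exp (r * t₀) * (Gamma β / r ^ β)) := by
        gcongr
        exact integral_sub_rpow_mul_exp_le hβ hr hat₀
      _ = K * (Gamma β / r ^ β) * P := by
        rw [mul_comm (exp _), exp_neg]; field_simp
  have hP : P = 0 := by nlinarith
  intro t ht
  have := hφP t ht
  rw [hP, zero_mul] at this
  exact le_antisymm this (hφ₀ t ht)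

section MildSolution

variable {V W : Type*} [NormedAddCommGroup V] [NormedSpace ℝ V] [NormedAddCommGroup W]
  [NormedSpace ℝ W] {R : ℝ → W →L[ℝ] V} {f : V → W} {g u v : ℝ → V}

theorem IsMildSolutionOn.sub_eq_integral {S : Set ℝ} (hu : IsMildSolutionOn R f g u S)
    (hv : IsMildSolutionOn R f g v S) {t : ℝ} (ht : t ∈ S) :
    IntervalIntegrable (fun s => R (t - s) (f (u s) - f (v s))) volume 0 t ∧
      u t - v t = ∫ s in (0:ℝ)..t, R (t - s) (f (u s) - f (v s)) := by
  obtain ⟨hiu, hequ⟩ := hu.2 t ht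
  obtain ⟨hiv, heqv⟩ := hv.2 t ht
  simp_rw [map_sub]
  refine ⟨hiu.sub hiv, ?_⟩
  rw [intervalIntegral.integral_sub hiu hiv, hequ, heqv]
  abel

theorem IsMildSolutionOn.sub_eq_integral_of_eqOn {S : Set ℝ} (hu : IsMildSolutionOn R f g u S)
    (hv : IsMildSolutionOn R f g v S) {a t : ℝ} (ht : t ∈ S) (ha : 0 ≤ a) (hat : a ≤ t)
    (huv : EqOn u v (Ioc 0 a)) :
    u t - v t = ∫ s in a..t, R (t - s) (f (u s) - f (v s)) := by
  obtain ⟨hint, heq⟩ := hu.sub_eq_integral hv ht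
  have hint₀ : IntervalIntegrable _ volume 0 a := hint.mono_set <| by
    rw [uIcc_of_le ha, uIcc_of_le (ha.trans hat)]; exact Icc_subset_Icc_right hat
  have hint₁ : IntervalIntegrable _ volume a t := hint.mono_set <| by
    rw [uIcc_of_le hat, uIcc_of_le (ha.trans hat)]; exact Icc_subset_Icc_left ha
  have hvanish : ∫ s in (0:ℝ)..a, R (t - s) (f (u s) - f (v s)) = 0 :=
    integral_zero_ae (.of_forall fun s hs => by
      rw [uIoc_of_le ha] at hs; rw [huv hs, sub_self, map_zero])
  rw [heq, ← integral_add_adjacent_intervals hint₀ hint₁, hvanish, zero_add]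

theorem norm_apply_map_sub_le {M c p β C τ : ℝ}
    (hR : ∀ t > (0:ℝ), ∀ w : W, ‖R t w‖ ≤ M * t ^ (β - 1) * ‖w‖)
    (hf : ∀ x y : V, ‖f x - f y‖ ≤ c * (‖x‖ ^ p + ‖y‖ ^ p) * ‖x - y‖)
    (hM : 0 ≤ M) (hc : 0 ≤ c) (hp : 0 ≤ p) (hτ : 0 < τ) {x y : V} (hx : ‖x‖ ≤ C)
    (hy : ‖y‖ ≤ C) :
    ‖R τ (f x - f y)‖ ≤ M * (2 * c * C ^ p) * (τ ^ (β - 1) * ‖x - y‖) := by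
  have hxp : ‖x‖ ^ p ≤ C ^ p := rpow_le_rpow (norm_nonneg _) hx hp
  have hyp : ‖y‖ ^ p ≤ C ^ p := rpow_le_rpow (norm_nonneg _) hy hp
  calc ‖R τ (f x - f y)‖ ≤ M * τ ^ (β - 1) * ‖f x - f y‖ := hR τ hτ _
    _ ≤ M * τ ^ (β - 1) * (c * (C ^ p + C ^ p) * ‖x - y‖) := by
      gcongr
      exact (hf x y).trans (by gcongr)
    _ = M * (2 * c * C ^ p) * (τ ^ (β - 1) * ‖x - y‖) := by ring

theorem IsMildSolutionOn.exists_norm_sub_le_mul_integral {M c p β a T : ℝ}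
    (hu : IsMildSolutionOn R f g u (Ioc 0 T)) (hv : IsMildSolutionOn R f g v (Ioc 0 T))
    (ha : 0 < a) (huv : EqOn u v (Ioc 0 a)) (hβ : 0 < β)
    (hR : ∀ t > (0:ℝ), ∀ w : W, ‖R t w‖ ≤ M * t ^ (β - 1) * ‖w‖)
    (hf : ∀ x y : V, ‖f x - f y‖ ≤ c * (‖x‖ ^ p + ‖y‖ ^ p) * ‖x - y‖)
    (hM : 0 ≤ M) (hc : 0 ≤ c) (hp : 0 ≤ p) :
    ∃ K, 0 ≤ K ∧ ∀ t ∈ Icc a T,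
      ‖u t - v t‖ ≤ K * ∫ s in a..t, (t - s) ^ (β - 1) * ‖u s - v s‖ := by
  have hsub : Icc a T ⊆ Ioc 0 T := fun s hs => ⟨ha.trans_le hs.1, hs.2⟩
  obtain ⟨Cu, hCu⟩ := isCompact_Icc.exists_bound_of_continuousOn (hu.1.mono hsub)
  obtain ⟨Cv, hCv⟩ := isCompact_Icc.exists_bound_of_continuousOn (hv.1.mono hsub)
  set C := max (max Cu Cv) 0
  have hC : 0 ≤ C := le_max_right _ _
  refine ⟨M * (2 * c * C ^ p), by positivity, fun t ht => ?_⟩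
  have hcont : ContinuousOn (fun s => ‖u s - v s‖) (uIcc a t) :=
    ((hu.1.sub hv.1).norm.mono hsub).mono <| by
      rw [uIcc_of_le ht.1]; exact Icc_subset_Icc_right ht.2
  rw [hu.sub_eq_integral_of_eqOn hv (hsub ht) ha.le ht.1 huv, ← intervalIntegral.integral_const_mul]
  refine norm_integral_le_of_norm_le ht.1 ?_
    ((intervalIntegrable_sub_rpow hβ a t).mul_continuousOn hcont |>.const_mul _)
  filter_upwards [Measure.ae_ne volume t] with s hst hs
  have hs' : s ∈ Icc a T := ⟨hs.1.le, hs.2.trans ht.2⟩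
  exact norm_apply_map_sub_le hR hf hM hc hp (sub_pos.2 (lt_of_le_of_ne hs.2 hst))
    ((hCu s hs').trans ((le_max_left _ _).trans (le_max_left _ _)))
    ((hCv s hs').trans ((le_max_right _ _).trans (le_max_left _ _)))

end MildSolution

theorem uniqueness_of_continuation_general
    {V W : Type*} [NormedAddCommGroup V] [NormedSpace ℝ V]
    [NormedAddCommGroup W] [NormedSpace ℝ W]
    (ρ α ε M c : ℝ)
    (hρ : 1 < ρ) (hα : 1 < α) (hε : 0 < ε)
    (hM : 0 < M) (hc : 0 < c)
    (R : ℝ → W →L[ℝ] V)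
    (hRbound : ∀ t > (0:ℝ), ∀ w : W, ‖R t w‖ ≤ M * t ^ (α * (ρ - 1) * ε - 1) * ‖w‖)
    (f : V → W)
    (hf : ∀ x y : V, ‖f x - f y‖ ≤ c * (‖x‖ ^ (ρ - 1) + ‖y‖ ^ (ρ - 1)) * ‖x - y‖)
    (τ₀ τ' : ℝ) (hτ₀ : 0 < τ₀)
    (g : ℝ → V)
    (u v : ℝ → V)
    (hu : IsMildSolutionOn R f g u (Ioc 0 τ'))
    (hv : IsMildSolutionOn R f g v (Ioc 0 τ'))
    (hagree : EqOn u v (Ioc 0 τ₀)) :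
    EqOn u v (Ioc 0 τ') := by
  have hβ : 0 < α * (ρ - 1) * ε := by
    have := sub_pos.2 hρ
    have : 0 < α := by linarith
    positivity
  obtain ⟨K, hK, hvolterra⟩ := hu.exists_norm_sub_le_mul_integral hv hτ₀ hagree hβ hRbound hf
    hM.le hc.le (sub_nonneg.2 hρ.le)
  have hdiff : EqOn (fun s => ‖u s - v s‖) 0 (Icc τ₀ τ') :=
    eqOn_zero_of_le_mul_integral_sub_rpow hβ hK
      ((hu.1.sub hv.1).norm.mono fun s hs => ⟨hτ₀.trans_le hs.1, hs.2⟩)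
      (fun _ _ => norm_nonneg _) hvolterra
  intro t ht
  rcases le_or_gt t τ₀ with h | h
  · exact hagree ⟨ht.1, h⟩
  · simpa [sub_eq_zero] using hdiff ⟨h.le, ht.2⟩

/-- **Uniqueness of continuation (Part 3 of the proof of Theorem 1.1(D)).**
If `u` and `v` are mild solutions with the same forcing `g` on `(0,τ']` which agree on
`(0,τ₀]` for some `0 < τ₀ < τ'`, then they agree on all of `(0,τ']`. -/
theorem uniqueness_of_continuation
    {V W : Type*} [NormedAddCommGroup V] [NormedSpace ℝ V] [CompleteSpace V]
    [NormedAddCommGroup W] [NormedSpace ℝ W] [CompleteSpace W]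
    (ρ α ε M c B : ℝ)
    (hρ : 1 < ρ) (hα : 1 < α) (hε : 0 < ε) (hαρε : α * ρ * ε < 1)
    (hM : 0 < M) (hc : 0 < c)
    (R : ℝ → W →L[ℝ] V)
    (hRcont : ∀ w : W, ContinuousOn (fun t => R t w) (Ioi (0:ℝ)))
    (hRbound : ∀ t > (0:ℝ), ∀ w : W, ‖R t w‖ ≤ M * t ^ (α * (ρ - 1) * ε - 1) * ‖w‖)
    (f : V → W) (hf0 : f 0 = 0)
    (hf : ∀ x y : V, ‖f x - f y‖ ≤ c * (‖x‖ ^ (ρ - 1) + ‖y‖ ^ (ρ - 1)) * ‖x - y‖)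
    (hBint : IntervalIntegrable
      (fun s => (1 - s) ^ (α * (ρ - 1) * ε - 1) * s ^ (-(α * ρ * ε))) volume 0 1)
    (hB : B = ∫ s in (0:ℝ)..1, (1 - s) ^ (α * (ρ - 1) * ε - 1) * s ^ (-(α * ρ * ε)))
    (τ₀ τ' : ℝ) (hτ₀ : 0 < τ₀) (hττ : τ₀ < τ')
    (g : ℝ → V) (hg : ContinuousOn g (Ioc 0 τ'))
    (u v : ℝ → V)
    (hu : IsMildSolutionOn R f g u (Ioc 0 τ'))
    (hv : IsMildSolutionOn R f g v (Ioc 0 τ'))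
    (hagree : EqOn u v (Ioc 0 τ₀)) :
    EqOn u v (Ioc 0 τ') :=
  uniqueness_of_continuation_general ρ α ε M c hρ hα hε hM hc R hRbound f hf τ₀ τ' hτ₀ g u v hu hv
    hagree
end

section
/- Assume the abstract setting described in the context. Let τ* ∈ (0,∞), let g : (0,τ*] → V be continuous, and let u : (0,τ*) → V be continuous such that for every t ∈ (0,τ*) the Bochner integral ∫₀^t R(t−s) f(u(s)) ds converges and u(t) = g(t) + ∫₀^t R(t−s) f(u(s)) ds. If sup_{t∈(0,τ*)} t^{αε}‖u(t)‖_V < ∞, then the limit ū := lim_{t→τ*⁻} u(t) exists in V, and the function equal to u on (0,τ*) and to ū at τ* is a mild solution with forcing g on (0,τ*]. -/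
/-!
The weighted bound `t^{αε} ‖u t‖ ≤ C` and the growth `‖f v‖ ≤ c ‖v‖^ρ` of the nonlinearity give
`‖f (u s)‖ ≤ c C^ρ s^{-αρε}`. The substitution `s = t σ` turns the Duhamel integral
`∫₀^t R(t-s) f(u s) ds` into `∫₀^1 t R(t(1-σ)) f(u(tσ)) dσ`, whose integrand is dominated, uniformly
for `t` near `τ⋆`, by a multiple of the Beta weight `(1-σ)^{α(ρ-1)ε-1} σ^{-αρε}`. Dominated
convergence then gives the limit of the integral as `t → τ⋆⁻`, hence the limit of `u = g + ∫ …`,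
and the same domination makes the Duhamel integral converge at `τ⋆` itself, where it takes the
limiting value.
-/

open MeasureTheory Set Filter Topology intervalIntegral

open scoped Interval

section Operators

variable {𝕜 V W : Type*} [NontriviallyNormedField 𝕜]
  [SeminormedAddCommGroup V] [NormedSpace 𝕜 V] [SeminormedAddCommGroup W] [NormedSpace 𝕜 W]

theorem tendsto_apply_of_tendsto_of_norm_apply_le {ι : Type*} {l : Filter ι}
    {F : ι → W →L[𝕜] V} {K : ι → ℝ} {k : ℝ} {w : ι → W} {w₀ : W} {y : V}
    (hF : Tendsto (fun i => F i w₀) l (𝓝 y)) (hK : Tendsto K l (𝓝 k))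
    (hle : ∀ᶠ i in l, ∀ v, ‖F i v‖ ≤ K i * ‖v‖) (hw : Tendsto w l (𝓝 w₀)) :
    Tendsto (fun i => F i (w i)) l (𝓝 y) := by
  have hsmall : Tendsto (fun i => F i (w i - w₀)) l (𝓝 0) := by
    refine squeeze_zero_norm' (hle.mono fun i hi => hi _) ?_
    simpa using hK.mul (tendsto_iff_norm_sub_tendsto_zero.1 hw)
  simpa using hsmall.add hF

theorem continuousAt_apply_of_norm_apply_le_rpow {R : ℝ → W →L[𝕜] V} {M θ t₀ : ℝ} {w₀ : W}
    (hRcont : ∀ w : W, ContinuousOn (fun t => R t w) (Ioi 0))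
    (hRbound : ∀ t > (0:ℝ), ∀ w : W, ‖R t w‖ ≤ M * t ^ θ * ‖w‖) (ht₀ : 0 < t₀) :
    ContinuousAt (fun p : ℝ × W => R p.1 p.2) (t₀, w₀) := by
  have hfst : Tendsto (fun p : ℝ × W => p.1) (𝓝 (t₀, w₀)) (𝓝 t₀) := continuous_fst.tendsto _
  have hK : Tendsto (fun p : ℝ × W => M * p.1 ^ θ) (𝓝 (t₀, w₀)) (𝓝 (M * t₀ ^ θ)) :=
    tendsto_const_nhds.mul ((Real.continuousAt_rpow_const t₀ θ (Or.inl ht₀.ne')).tendsto.comp hfst)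
  have hle : ∀ᶠ p : ℝ × W in 𝓝 (t₀, w₀), ∀ w, ‖R p.1 w‖ ≤ M * p.1 ^ θ * ‖w‖ :=
    (hfst.eventually (lt_mem_nhds ht₀)).mono fun p hp => hRbound p.1 hp
  exact tendsto_apply_of_tendsto_of_norm_apply_le
    (((hRcont w₀).continuousAt (Ioi_mem_nhds ht₀)).tendsto.comp hfst) hK hle
    (continuous_snd.tendsto _)

end Operators

section Nonlinearity

variable {V W : Type*} [SeminormedAddCommGroup V] [SeminormedAddCommGroup W] {f : V → W} {ρ c : ℝ}

theorem continuous_of_norm_sub_le_mul_rpow (hρ : 1 ≤ ρ)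
    (hf : ∀ x y : V, ‖f x - f y‖ ≤ c * (‖x‖ ^ (ρ - 1) + ‖y‖ ^ (ρ - 1)) * ‖x - y‖) :
    Continuous f := by
  refine continuous_iff_continuousAt.2 fun x => tendsto_iff_norm_sub_tendsto_zero.2 <|
    squeeze_zero_norm' (Eventually.of_forall fun y => by simpa using hf y x) ?_
  have hbound : Continuous fun y : V => c * (‖y‖ ^ (ρ - 1) + ‖x‖ ^ (ρ - 1)) * ‖y - x‖ :=
    (continuous_const.mul ((continuous_norm.rpow_const fun _ => Or.inr (by linarith)).add
      continuous_const)).mul (continuous_norm.comp (continuous_id.sub continuous_const))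
  simpa using hbound.tendsto x

theorem norm_le_mul_rpow_of_norm_sub_le (hρ : 1 < ρ) (hf0 : f 0 = 0)
    (hf : ∀ x y : V, ‖f x - f y‖ ≤ c * (‖x‖ ^ (ρ - 1) + ‖y‖ ^ (ρ - 1)) * ‖x - y‖) (v : V) :
    ‖f v‖ ≤ c * ‖v‖ ^ ρ := by
  have h := hf v 0
  rw [hf0, sub_zero, sub_zero, norm_zero, Real.zero_rpow (by linarith), add_zero] at h
  rcases (norm_nonneg v).eq_or_lt with hv | hv
  · simpa [← hv, Real.zero_rpow (by linarith : ρ ≠ 0)] using h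
  · rwa [mul_assoc, ← Real.rpow_add_one hv.ne', sub_add_cancel] at h

end Nonlinearity

theorem rpow_le_of_rpow_mul_le {a ρ x t C : ℝ} (hx : 0 ≤ x) (ht : 0 < t) (hρ : 0 ≤ ρ)
    (h : t ^ a * x ≤ C) : x ^ ρ ≤ C ^ ρ * t ^ (-(a * ρ)) := by
  have hta : 0 < t ^ a := Real.rpow_pos_of_pos ht a
  have hC : 0 ≤ C := (mul_nonneg hta.le hx).trans h
  have hx' : x ≤ C * t ^ (-a) := by
    rw [Real.rpow_neg ht.le, ← div_eq_mul_inv, le_div_iff₀ hta, mul_comm]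
    exact h
  calc x ^ ρ ≤ (C * t ^ (-a)) ^ ρ := Real.rpow_le_rpow hx hx' hρ
    _ = C ^ ρ * t ^ (-(a * ρ)) := by
      rw [Real.mul_rpow hC (Real.rpow_nonneg ht.le _), ← Real.rpow_mul ht.le, neg_mul]

theorem ae_mem_Ioo_of_mem_uIoc {a b : ℝ} (hab : a ≤ b) :
    ∀ᵐ x ∂volume, x ∈ Ι a b → x ∈ Ioo a b := by
  filter_upwards [Ioo_ae_eq_Ioc (μ := volume) (a := a) (b := b)] with x hx hmem
  rw [uIoc_of_le hab] at hmem
  exact hx.mpr hmem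

theorem mul_mem_Ioo_of_mem_Ioc {τ t σ : ℝ} (ht : t ∈ Ioc 0 τ) (hσ : σ ∈ Ioo 0 1) :
    t * σ ∈ Ioo 0 τ :=
  ⟨mul_pos ht.1 hσ.1, (mul_lt_of_lt_one_right ht.1 hσ.2).trans_le ht.2⟩

section Duhamel

variable {V W : Type*} [NormedAddCommGroup V] [NormedSpace ℝ V]
  [NormedAddCommGroup W] [NormedSpace ℝ W] (R : ℝ → W →L[ℝ] V) (f : V → W) (u : ℝ → V)

def rescaledDuhamelIntegrand (t σ : ℝ) : V := t • R (t - t * σ) (f (u (t * σ)))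

theorem integral_duhamel_eq_integral_rescaled (t : ℝ) :
    ∫ s in (0:ℝ)..t, R (t - s) (f (u s)) = ∫ σ in (0:ℝ)..1, rescaledDuhamelIntegrand R f u t σ := by
  simp only [rescaledDuhamelIntegrand]
  rw [intervalIntegral.integral_smul,
    smul_integral_comp_mul_left (fun s => R (t - s) (f (u s))), mul_zero, mul_one]

theorem intervalIntegrable_duhamel_of_rescaled {t : ℝ} (ht : t ≠ 0)
    (h : IntervalIntegrable (rescaledDuhamelIntegrand R f u t) volume 0 1) :
    IntervalIntegrable (fun s => R (t - s) (f (u s))) volume 0 t := by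
  have h' : IntervalIntegrable (fun σ => R (t - t * σ) (f (u (t * σ)))) volume (0 / t) (t / t) := by
    have hscale : (fun σ => R (t - t * σ) (f (u (t * σ))))
        = t⁻¹ • rescaledDuhamelIntegrand R f u t := by
      funext σ
      simp [rescaledDuhamelIntegrand, smul_smul, inv_mul_cancel₀ ht]
    rw [zero_div, div_self ht, hscale]
    exact h.smul t⁻¹
  exact (IntervalIntegrable.comp_mul_left_iff (f := fun s => R (t - s) (f (u s))) ht).1 h'

variable {R f u}

theorem continuousAt_rescaledDuhamelIntegrand {τ M θ t σ : ℝ}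
    (hRcont : ∀ w : W, ContinuousOn (fun t => R t w) (Ioi 0))
    (hRbound : ∀ t > (0:ℝ), ∀ w : W, ‖R t w‖ ≤ M * t ^ θ * ‖w‖)
    (hf : Continuous f) (hu : ContinuousOn u (Ioo 0 τ)) (ht : 0 < t) (hσ : σ < 1)
    (htσ : t * σ ∈ Ioo 0 τ) :
    ContinuousAt (Function.uncurry (rescaledDuhamelIntegrand R f u)) (t, σ) := by
  have hR := continuousAt_apply_of_norm_apply_le_rpow (w₀ := f (u (t * σ))) hRcont hRbound
    (show 0 < t - t * σ by nlinarith)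
  have hmul : ContinuousAt (fun p : ℝ × ℝ => p.1 * p.2) (t, σ) := by fun_prop
  have hfu : ContinuousAt (fun p : ℝ × ℝ => f (u (p.1 * p.2))) (t, σ) :=
    hf.continuousAt.comp ((hu.continuousAt (isOpen_Ioo.mem_nhds htσ)).comp_of_eq hmul rfl)
  have hsub : ContinuousAt (fun p : ℝ × ℝ => p.1 - p.1 * p.2) (t, σ) := by fun_prop
  have hRfu : ContinuousAt (fun p : ℝ × ℝ => R (p.1 - p.1 * p.2) (f (u (p.1 * p.2)))) (t, σ) :=
    hR.comp_of_eq (hsub.prodMk hfu) rfl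
  exact continuousAt_fst.smul hRfu

theorem norm_rescaledDuhamelIntegrand_le {M θ β D t σ : ℝ} (hM : 0 ≤ M)
    (hRbound : ∀ t > (0:ℝ), ∀ w : W, ‖R t w‖ ≤ M * t ^ θ * ‖w‖)
    (hfu : ‖f (u (t * σ))‖ ≤ D * (t * σ) ^ (-β)) (ht : 0 < t) (hσ : σ ∈ Ioo 0 1) :
    ‖rescaledDuhamelIntegrand R f u t σ‖
      ≤ M * D * t ^ (1 + θ - β) * ((1 - σ) ^ θ * σ ^ (-β)) := by
  have h1σ : 0 < 1 - σ := sub_pos.2 hσ.2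
  have hsplit : t - t * σ = t * (1 - σ) := by ring
  have hpow : t * (t * (1 - σ)) ^ θ * (t * σ) ^ (-β)
      = t ^ (1 + θ - β) * ((1 - σ) ^ θ * σ ^ (-β)) := by
    rw [Real.mul_rpow ht.le h1σ.le, Real.mul_rpow ht.le hσ.1.le, Real.rpow_sub ht,
      Real.rpow_add ht, Real.rpow_one, Real.rpow_neg ht.le]
    ring
  have hRM : 0 ≤ M * (t * (1 - σ)) ^ θ := mul_nonneg hM (Real.rpow_nonneg (by positivity) _)
  calc ‖rescaledDuhamelIntegrand R f u t σ‖
      = t * ‖R (t * (1 - σ)) (f (u (t * σ)))‖ := by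
        rw [rescaledDuhamelIntegrand, norm_smul, Real.norm_of_nonneg ht.le, hsplit]
    _ ≤ t * (M * (t * (1 - σ)) ^ θ * (D * (t * σ) ^ (-β))) := by
        gcongr
        exact (hRbound _ (by positivity) _).trans (mul_le_mul_of_nonneg_left hfu hRM)
    _ = M * D * (t * (t * (1 - σ)) ^ θ * (t * σ) ^ (-β)) := by ring
    _ = M * D * t ^ (1 + θ - β) * ((1 - σ) ^ θ * σ ^ (-β)) := by rw [hpow]; ring

theorem aestronglyMeasurable_rescaledDuhamelIntegrand {τ M θ t : ℝ}
    (hRcont : ∀ w : W, ContinuousOn (fun t => R t w) (Ioi 0))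
    (hRbound : ∀ t > (0:ℝ), ∀ w : W, ‖R t w‖ ≤ M * t ^ θ * ‖w‖)
    (hf : Continuous f) (hu : ContinuousOn u (Ioo 0 τ)) (ht : t ∈ Ioc 0 τ) :
    AEStronglyMeasurable (rescaledDuhamelIntegrand R f u t) (volume.restrict (Ι 0 1)) := by
  have hcont : ContinuousOn (rescaledDuhamelIntegrand R f u t) (Ioo 0 1) := fun σ hσ =>
    ((continuousAt_rescaledDuhamelIntegrand hRcont hRbound hf hu ht.1 hσ.2
      (mul_mem_Ioo_of_mem_Ioc ht hσ)).comp_of_eq (Continuous.prodMk_right t).continuousAt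
        rfl).continuousWithinAt
  rw [uIoc_of_le zero_le_one, ← Measure.restrict_congr_set Ioo_ae_eq_Ioc]
  exact hcont.aestronglyMeasurable measurableSet_Ioo

theorem intervalIntegrable_rescaledDuhamelIntegrand {τ M θ β D t : ℝ} (hM : 0 ≤ M)
    (hRcont : ∀ w : W, ContinuousOn (fun t => R t w) (Ioi 0))
    (hRbound : ∀ t > (0:ℝ), ∀ w : W, ‖R t w‖ ≤ M * t ^ θ * ‖w‖)
    (hf : Continuous f) (hu : ContinuousOn u (Ioo 0 τ))
    (hfu : ∀ s ∈ Ioo 0 τ, ‖f (u s)‖ ≤ D * s ^ (-β))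
    (hint : IntervalIntegrable (fun σ => (1 - σ) ^ θ * σ ^ (-β)) volume 0 1)
    (ht : t ∈ Ioc 0 τ) :
    IntervalIntegrable (rescaledDuhamelIntegrand R f u t) volume 0 1 := by
  refine (hint.const_mul (M * D * t ^ (1 + θ - β))).mono_fun'
    (aestronglyMeasurable_rescaledDuhamelIntegrand hRcont hRbound hf hu ht) ?_
  rw [EventuallyLE, ae_restrict_iff' measurableSet_uIoc]
  filter_upwards [ae_mem_Ioo_of_mem_uIoc zero_le_one] with σ hσ hσ'
  have hσ := hσ hσ'
  exact norm_rescaledDuhamelIntegrand_le hM hRbound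
    (hfu _ (mul_mem_Ioo_of_mem_Ioc ht hσ)) ht.1 hσ

theorem tendsto_integral_rescaledDuhamelIntegrand {τ M θ β D : ℝ} (hτ : 0 < τ)
    (hM : 0 ≤ M) (hD : 0 ≤ D)
    (hRcont : ∀ w : W, ContinuousOn (fun t => R t w) (Ioi 0))
    (hRbound : ∀ t > (0:ℝ), ∀ w : W, ‖R t w‖ ≤ M * t ^ θ * ‖w‖)
    (hf : Continuous f) (hu : ContinuousOn u (Ioo 0 τ))
    (hfu : ∀ s ∈ Ioo 0 τ, ‖f (u s)‖ ≤ D * s ^ (-β))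
    (hint : IntervalIntegrable (fun σ => (1 - σ) ^ θ * σ ^ (-β)) volume 0 1) :
    Tendsto (fun t => ∫ σ in (0:ℝ)..1, rescaledDuhamelIntegrand R f u t σ) (𝓝[<] τ)
      (𝓝 (∫ σ in (0:ℝ)..1, rescaledDuhamelIntegrand R f u τ σ)) := by
  set γ := 1 + θ - β
  have hnear : ∀ᶠ t in 𝓝[<] τ, t ∈ Ioc 0 τ ∧ t ^ γ ≤ τ ^ γ + 1 := by
    have hpow : ∀ᶠ t in 𝓝 τ, t ^ γ < τ ^ γ + 1 :=
      (Real.continuousAt_rpow_const τ γ (Or.inl hτ.ne')).eventually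
        (gt_mem_nhds (lt_add_one _))
    filter_upwards [Ioo_mem_nhdsLT hτ, nhdsWithin_le_nhds hpow] with t ht htγ
    exact ⟨Ioo_subset_Ioc_self ht, htγ.le⟩
  refine tendsto_integral_filter_of_dominated_convergence
    (fun σ => M * D * (τ ^ γ + 1) * ((1 - σ) ^ θ * σ ^ (-β))) ?_ ?_ (hint.const_mul _) ?_
  · filter_upwards [hnear] with t ht
    exact aestronglyMeasurable_rescaledDuhamelIntegrand hRcont hRbound hf hu ht.1
  · filter_upwards [hnear] with t ⟨ht, htγ⟩
    filter_upwards [ae_mem_Ioo_of_mem_uIoc zero_le_one] with σ hσ hσ'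
    have hσ := hσ hσ'
    have hweight : 0 ≤ (1 - σ) ^ θ * σ ^ (-β) :=
      mul_nonneg (Real.rpow_nonneg (sub_pos.2 hσ.2).le _) (Real.rpow_nonneg hσ.1.le _)
    calc ‖rescaledDuhamelIntegrand R f u t σ‖ ≤ M * D * t ^ γ * ((1 - σ) ^ θ * σ ^ (-β)) :=
          norm_rescaledDuhamelIntegrand_le hM hRbound
            (hfu _ (mul_mem_Ioo_of_mem_Ioc ht hσ)) ht.1 hσ
      _ ≤ M * D * (τ ^ γ + 1) * ((1 - σ) ^ θ * σ ^ (-β)) := by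
          gcongr
  · filter_upwards [ae_mem_Ioo_of_mem_uIoc zero_le_one] with σ hσ hσ'
    have hσ := hσ hσ'
    have hcont := continuousAt_rescaledDuhamelIntegrand hRcont hRbound hf hu hτ hσ.2
      (mul_mem_Ioo_of_mem_Ioc (right_mem_Ioc.2 hτ) hσ)
    exact (hcont.comp_of_eq (Continuous.prodMk_left σ).continuousAt rfl).tendsto.mono_left
      nhdsWithin_le_nhds

end Duhamel

theorem IsMildSolutionOn.extend_Ioc {V W : Type*} [NormedAddCommGroup V] [NormedSpace ℝ V]
    [NormedAddCommGroup W] [NormedSpace ℝ W] {R : ℝ → W →L[ℝ] V} {f : V → W} {g u : ℝ → V}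
    {τ : ℝ} {ubar : V} (hu : IsMildSolutionOn R f g u (Ioo 0 τ)) (hτ : 0 < τ)
    (hlim : Tendsto u (𝓝[<] τ) (𝓝 ubar))
    (hint : IntervalIntegrable (fun s => R (τ - s) (f (u s))) volume 0 τ)
    (heq : ubar = g τ + ∫ s in (0:ℝ)..τ, R (τ - s) (f (u s))) :
    IsMildSolutionOn R f g (fun t => if t = τ then ubar else u t) (Ioc 0 τ) := by
  set uext : ℝ → V := fun t => if t = τ then ubar else u t
  have huextτ : uext τ = ubar := if_pos rfl
  have huext : ∀ t ≠ τ, uext t = u t := fun t ht => if_neg ht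
  have hduhamel : ∀ t, (fun s => R (t - s) (f (uext s))) =ᵐ[volume] fun s => R (t - s) (f (u s)) :=
    fun t => (countable_singleton τ).ae_notMem volume |>.mono fun s hs => by simp only [huext s hs]
  refine ⟨fun t ht => ?_, fun t ht => ?_⟩
  · rcases ht.2.eq_or_lt with htτ | hlt
    · rw [htτ, ← Ioo_insert_right hτ, continuousWithinAt_insert_self, ContinuousWithinAt,
        nhdsWithin_Ioo_eq_nhdsLT hτ, huextτ]
      exact hlim.congr' (eventually_nhdsWithin_of_forall fun s hs => (huext s hs.ne).symm)
    · have heqnear : u =ᶠ[𝓝 t] uext :=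
        eventually_of_mem (Iio_mem_nhds hlt) fun s hs => (huext s hs.ne).symm
      exact ((hu.1.continuousAt (isOpen_Ioo.mem_nhds ⟨ht.1, hlt⟩)).congr
        heqnear).continuousWithinAt
  · rw [intervalIntegral.integral_congr_ae ((hduhamel t).mono fun s hs _ => hs)]
    have hint_ext : ∀ {t}, IntervalIntegrable (fun s => R (t - s) (f (u s))) volume 0 t →
        IntervalIntegrable (fun s => R (t - s) (f (uext s))) volume 0 t :=
      fun h => h.congr_ae (ae_restrict_of_ae (hduhamel _).symm)
    rcases ht.2.eq_or_lt with htτ | hlt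
    · rw [htτ, huextτ]
      exact ⟨hint_ext hint, heq⟩
    · obtain ⟨hint_t, heq_t⟩ := hu.2 t ⟨ht.1, hlt⟩
      exact ⟨hint_ext hint_t, (huext t hlt.ne).trans heq_t⟩

theorem extension_to_endpoint_general
    {V W : Type*} [NormedAddCommGroup V] [NormedSpace ℝ V] [CompleteSpace V]
    [NormedAddCommGroup W] [NormedSpace ℝ W] [CompleteSpace W]
    (ρ α ε M c : ℝ)
    (hρ : 1 < ρ)
    (hM : 0 < M) (hc : 0 < c)
    (R : ℝ → W →L[ℝ] V)
    (hRcont : ∀ w : W, ContinuousOn (fun t => R t w) (Ioi (0:ℝ)))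
    (hRbound : ∀ t > (0:ℝ), ∀ w : W, ‖R t w‖ ≤ M * t ^ (α * (ρ - 1) * ε - 1) * ‖w‖)
    (f : V → W) (hf0 : f 0 = 0)
    (hf : ∀ x y : V, ‖f x - f y‖ ≤ c * (‖x‖ ^ (ρ - 1) + ‖y‖ ^ (ρ - 1)) * ‖x - y‖)
    (hBint : IntervalIntegrable
      (fun s => (1 - s) ^ (α * (ρ - 1) * ε - 1) * s ^ (-(α * ρ * ε))) volume 0 1)
    (τs : ℝ) (hτs : 0 < τs)
    (g : ℝ → V) (hg : ContinuousOn g (Ioc 0 τs))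
    (u : ℝ → V) (hu : IsMildSolutionOn R f g u (Ioo 0 τs))
    (hubdd : ∃ C : ℝ, ∀ t ∈ Ioo (0:ℝ) τs, t ^ (α * ε) * ‖u t‖ ≤ C) :
    ∃ ubar : V, Tendsto u (𝓝[Ioo (0:ℝ) τs] τs) (𝓝 ubar) ∧
      IsMildSolutionOn R f g (fun t => if t = τs then ubar else u t) (Ioc 0 τs) := by
  obtain ⟨C, hC⟩ := hubdd
  have hC0 : 0 ≤ C := le_trans (by positivity) (hC (τs / 2) ⟨half_pos hτs, half_lt_self hτs⟩)
  have hfu : ∀ s ∈ Ioo 0 τs, ‖f (u s)‖ ≤ c * C ^ ρ * s ^ (-(α * ρ * ε)) := fun s hs => by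
    rw [mul_assoc, show α * ρ * ε = α * ε * ρ by ring]
    exact (norm_le_mul_rpow_of_norm_sub_le hρ hf0 hf _).trans <| mul_le_mul_of_nonneg_left
      (rpow_le_of_rpow_mul_le (norm_nonneg _) hs.1 (by linarith) (hC s hs)) hc.le
  have hfc := continuous_of_norm_sub_le_mul_rpow hρ.le hf
  have hint := intervalIntegrable_duhamel_of_rescaled R f u hτs.ne' <|
    intervalIntegrable_rescaledDuhamelIntegrand hM.le hRcont hRbound hfc hu.1 hfu hBint
      (right_mem_Ioc.2 hτs)
  have hduhamel := tendsto_integral_rescaledDuhamelIntegrand hτs hM.le (by positivity) hRcont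
    hRbound hfc hu.1 hfu hBint
  simp only [← integral_duhamel_eq_integral_rescaled] at hduhamel
  have hg' : Tendsto g (𝓝[<] τs) (𝓝 (g τs)) := by
    simpa [nhdsWithin_Ioo_eq_nhdsLT hτs] using
      ((hg τs (right_mem_Ioc.2 hτs)).mono Ioo_subset_Ioc_self).tendsto
  have hlim : Tendsto u (𝓝[<] τs) (𝓝 (g τs + ∫ s in (0:ℝ)..τs, R (τs - s) (f (u s)))) :=
    (hg'.add hduhamel).congr' <|
      eventually_of_mem (Ioo_mem_nhdsLT hτs) fun t ht => (hu.2 t ht).2.symm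
  exact ⟨_, by rwa [nhdsWithin_Ioo_eq_nhdsLT hτs], hu.extend_Ioc hτs hlim hint rfl⟩

/-- **Extension to the endpoint (core of the blow-up alternative, Theorem 1.1(D)).**
If `u` is a mild solution with forcing `g` on the open interval `(0,τ⋆)` whose weighted norm
`t^{αε}‖u t‖` is bounded, then `u` has a limit `ū` as `t → τ⋆⁻` and the function equal to `u`
on `(0,τ⋆)` and to `ū` at `τ⋆` is a mild solution with forcing `g` on `(0,τ⋆]`. -/
theorem extension_to_endpoint
    {V W : Type*} [NormedAddCommGroup V] [NormedSpace ℝ V] [CompleteSpace V]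
    [NormedAddCommGroup W] [NormedSpace ℝ W] [CompleteSpace W]
    (ρ α ε M c B : ℝ)
    (hρ : 1 < ρ) (hα : 1 < α) (hε : 0 < ε) (hαρε : α * ρ * ε < 1)
    (hM : 0 < M) (hc : 0 < c)
    (R : ℝ → W →L[ℝ] V)
    (hRcont : ∀ w : W, ContinuousOn (fun t => R t w) (Ioi (0:ℝ)))
    (hRbound : ∀ t > (0:ℝ), ∀ w : W, ‖R t w‖ ≤ M * t ^ (α * (ρ - 1) * ε - 1) * ‖w‖)
    (f : V → W) (hf0 : f 0 = 0)
    (hf : ∀ x y : V, ‖f x - f y‖ ≤ c * (‖x‖ ^ (ρ - 1) + ‖y‖ ^ (ρ - 1)) * ‖x - y‖)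
    (hBint : IntervalIntegrable
      (fun s => (1 - s) ^ (α * (ρ - 1) * ε - 1) * s ^ (-(α * ρ * ε))) volume 0 1)
    (hB : B = ∫ s in (0:ℝ)..1, (1 - s) ^ (α * (ρ - 1) * ε - 1) * s ^ (-(α * ρ * ε)))
    (τs : ℝ) (hτs : 0 < τs)
    (g : ℝ → V) (hg : ContinuousOn g (Ioc 0 τs))
    (u : ℝ → V) (hu : IsMildSolutionOn R f g u (Ioo 0 τs))
    (hubdd : ∃ C : ℝ, ∀ t ∈ Ioo (0:ℝ) τs, t ^ (α * ε) * ‖u t‖ ≤ C) :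
    ∃ ubar : V, Tendsto u (𝓝[Ioo (0:ℝ) τs] τs) (𝓝 ubar) ∧
      IsMildSolutionOn R f g (fun t => if t = τs then ubar else u t) (Ioc 0 τs) :=
  extension_to_endpoint_general ρ α ε M c hρ hM hc R hRcont hRbound f hf0 hf hBint τs hτs g hg u hu
    hubdd
end

section
/- Assume the abstract setting described in the context. Let μ > 0 satisfy M·c·μ^{ρ−1}·B ≤ 1/4. Suppose g₁, g₂ : (0,∞) → V are continuous and u₁, u₂ : (0,∞) → V are mild solutions with forcings g₁ and g₂ respectively on (0,∞), with sup_{t>0} t^{αε}‖u₁(t)‖_V ≤ μ and sup_{t>0} t^{αε}‖u₂(t)‖_V ≤ μ. Then sup_{t>0} t^{αε}‖u₁(t) − u₂(t)‖_V ≤ 2 · sup_{t>0} t^{αε}‖g₁(t) − g₂(t)‖_V. -/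
/-!
Subtracting the two Duhamel formulas, `u₁ - u₂ = (g₁ - g₂) + ∫₀^t R(t-s)(f(u₁ s) - f(u₂ s)) ds`.
On solutions of weighted size `μ` the nonlinearity is Lipschitz with weight `2cμ^{ρ-1}s^{-αε(ρ-1)}`,
so with `Φ` the weighted supremum of `u₁ - u₂` the smoothing bound on `R` and the Beta-type
scaling `∫₀^t (t-s)^{a-1} s^{-b} ds = t^{a-b} B` bound the weighted Duhamel term by
`2McΦμ^{ρ-1}B ≤ Φ/2`. Hence `Φ ≤ Γ + Φ/2` for the weighted supremum `Γ` of `g₁ - g₂`,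
and `Φ` is finite (at most `2μ`), so `Φ ≤ 2Γ`.
-/

open MeasureTheory Set Filter Topology intervalIntegral
open scoped ENNReal

namespace ContinuousDependence

lemma rpow_mul_le_iff_le_mul_rpow_neg {t δ x K : ℝ} (ht : 0 < t) :
    t ^ δ * x ≤ K ↔ x ≤ K * t ^ (-δ) := by
  rw [Real.rpow_neg ht.le, ← div_eq_mul_inv, le_div_iff₀ (Real.rpow_pos_of_pos ht δ), mul_comm]

lemma sub_rpow_mul_rpow_neg_eqOn {a b t : ℝ} (ht : 0 < t) :
    EqOn (fun s => (t - s) ^ (a - 1) * s ^ (-b))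
      (fun s => t ^ (a - 1 - b) * ((1 - s / t) ^ (a - 1) * (s / t) ^ (-b))) (uIcc 0 t) := by
  intro s hs
  rw [uIcc_of_le ht.le] at hs
  have h1 : 1 - s / t = (t - s) / t := by field_simp
  have h2 : t ^ (a - 1 - b) = t ^ (a - 1) * t ^ (-b) := by
    rw [← Real.rpow_add ht]; ring_nf
  have := Real.rpow_pos_of_pos ht (a - 1)
  have := Real.rpow_pos_of_pos ht (-b)
  simp only [h1]
  rw [Real.div_rpow (by linarith [hs.2]) ht.le, Real.div_rpow hs.1 ht.le, h2]
  field_simp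

lemma intervalIntegrable_sub_rpow_mul_rpow_neg {a b t : ℝ} (ht : 0 < t)
    (hB : IntervalIntegrable (fun s => (1 - s) ^ (a - 1) * s ^ (-b)) volume 0 1) :
    IntervalIntegrable (fun s => (t - s) ^ (a - 1) * s ^ (-b)) volume 0 t := by
  have hscaled := hB.comp_mul_right (c := t⁻¹)
  simp only [zero_div, one_div, inv_inv] at hscaled
  refine (hscaled.const_mul (t ^ (a - 1 - b))).congr fun s hs => ?_
  simpa [div_eq_mul_inv] using (sub_rpow_mul_rpow_neg_eqOn ht (uIoc_subset_uIcc hs)).symm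

lemma integral_sub_rpow_mul_rpow_neg {a b t : ℝ} (ht : 0 < t) :
    ∫ s in (0:ℝ)..t, (t - s) ^ (a - 1) * s ^ (-b) =
      t ^ (a - b) * ∫ s in (0:ℝ)..1, (1 - s) ^ (a - 1) * s ^ (-b) := by
  rw [integral_congr (sub_rpow_mul_rpow_neg_eqOn ht),
    intervalIntegral.integral_const_mul,
    integral_comp_div (fun s => (1 - s) ^ (a - 1) * s ^ (-b)) ht.ne',
    zero_div, div_self ht.ne', smul_eq_mul, ← mul_assoc,
    show a - b = (a - 1 - b) + 1 by ring, Real.rpow_add ht, Real.rpow_one]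

variable {V W : Type*} [NormedAddCommGroup V] [NormedAddCommGroup W]

lemma norm_sub_le_of_norm_le {f : V → W} {c ρ r : ℝ}
    (hf : ∀ x y : V, ‖f x - f y‖ ≤ c * (‖x‖ ^ (ρ - 1) + ‖y‖ ^ (ρ - 1)) * ‖x - y‖)
    (hc : 0 ≤ c) (hρ : 1 ≤ ρ) {x y : V} (hx : ‖x‖ ≤ r) (hy : ‖y‖ ≤ r) :
    ‖f x - f y‖ ≤ 2 * c * r ^ (ρ - 1) * ‖x - y‖ := by
  have hρ' : 0 ≤ ρ - 1 := sub_nonneg.2 hρ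
  calc ‖f x - f y‖ ≤ c * (‖x‖ ^ (ρ - 1) + ‖y‖ ^ (ρ - 1)) * ‖x - y‖ := hf x y
    _ ≤ c * (r ^ (ρ - 1) + r ^ (ρ - 1)) * ‖x - y‖ := by gcongr
    _ = 2 * c * r ^ (ρ - 1) * ‖x - y‖ := by ring

lemma norm_sub_le_of_rpow_mul_norm_le {f : V → W} {c ρ δ μ Φ s : ℝ}
    (hf : ∀ x y : V, ‖f x - f y‖ ≤ c * (‖x‖ ^ (ρ - 1) + ‖y‖ ^ (ρ - 1)) * ‖x - y‖)
    (hc : 0 ≤ c) (hρ : 1 ≤ ρ) (hμ : 0 ≤ μ) (hs : 0 < s) {x y : V}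
    (hx : s ^ δ * ‖x‖ ≤ μ) (hy : s ^ δ * ‖y‖ ≤ μ) (hxy : s ^ δ * ‖x - y‖ ≤ Φ) :
    ‖f x - f y‖ ≤ 2 * c * μ ^ (ρ - 1) * Φ * s ^ (-(δ * ρ)) := by
  rw [rpow_mul_le_iff_le_mul_rpow_neg hs] at hx hy hxy
  have hpow : (μ * s ^ (-δ)) ^ (ρ - 1) * s ^ (-δ) = μ ^ (ρ - 1) * s ^ (-(δ * ρ)) := by
    rw [Real.mul_rpow hμ (Real.rpow_nonneg hs.le _), ← Real.rpow_mul hs.le, mul_assoc,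
      ← Real.rpow_add hs]
    ring_nf
  calc ‖f x - f y‖ ≤ 2 * c * (μ * s ^ (-δ)) ^ (ρ - 1) * ‖x - y‖ :=
        norm_sub_le_of_norm_le hf hc hρ hx hy
    _ ≤ 2 * c * (μ * s ^ (-δ)) ^ (ρ - 1) * (Φ * s ^ (-δ)) := by gcongr
    _ = 2 * c * Φ * ((μ * s ^ (-δ)) ^ (ρ - 1) * s ^ (-δ)) := by ring
    _ = 2 * c * μ ^ (ρ - 1) * Φ * s ^ (-(δ * ρ)) := by rw [hpow]; ring

/-- `sup_{t>0} t^δ ‖v t‖`, with junk value `0` when this set is unbounded. -/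
noncomputable def weightedSup (δ : ℝ) (v : ℝ → V) : ℝ := sSup ((fun t => t ^ δ * ‖v t‖) '' Ioi 0)

lemma weightedSup_nonneg (δ : ℝ) (v : ℝ → V) : 0 ≤ weightedSup δ v :=
  Real.sSup_nonneg <| by
    rintro _ ⟨t, ht, rfl⟩
    exact mul_nonneg (Real.rpow_nonneg (le_of_lt ht) _) (norm_nonneg _)

lemma le_weightedSup {δ K t : ℝ} {v : ℝ → V} (hv : ∀ t > (0:ℝ), t ^ δ * ‖v t‖ ≤ K)
    (ht : 0 < t) : t ^ δ * ‖v t‖ ≤ weightedSup δ v :=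
  le_csSup ⟨K, by rintro _ ⟨s, hs, rfl⟩; exact hv s hs⟩ (mem_image_of_mem _ ht)

lemma weightedSup_le {δ K : ℝ} {v : ℝ → V} (hv : ∀ t > (0:ℝ), t ^ δ * ‖v t‖ ≤ K) :
    weightedSup δ v ≤ K :=
  csSup_le (nonempty_Ioi.image _) <| by rintro _ ⟨t, ht, rfl⟩; exact hv t ht

lemma weightedSup_le_add {δ K E : ℝ} {v w e : ℝ → V}
    (hv : ∀ t > (0:ℝ), t ^ δ * ‖v t‖ ≤ K) (hvwe : ∀ t > (0:ℝ), v t = w t + e t)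
    (he : ∀ t > (0:ℝ), t ^ δ * ‖e t‖ ≤ E) :
    weightedSup δ v ≤ weightedSup δ w + E := by
  have hweighted : ∀ t > (0:ℝ), ∀ {x y z : V}, ‖x‖ ≤ ‖y‖ + ‖z‖ →
      t ^ δ * ‖x‖ ≤ t ^ δ * ‖y‖ + t ^ δ * ‖z‖ := fun t ht _ _ _ h => by
    rw [← mul_add]; exact mul_le_mul_of_nonneg_left h (Real.rpow_nonneg ht.le δ)
  have hw : ∀ t > (0:ℝ), t ^ δ * ‖w t‖ ≤ K + E := fun t ht => by
    have := hweighted t ht (norm_le_add_norm_add (w t) (e t))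
    rw [← hvwe t ht] at this
    linarith [hv t ht, he t ht]
  exact weightedSup_le fun t ht => by
    have := hweighted t ht (hvwe t ht ▸ norm_add_le (w t) (e t))
    linarith [le_weightedSup hw ht, he t ht]

variable [NormedSpace ℝ V] [NormedSpace ℝ W]

lemma norm_integral_le_of_kernel_bound {R : ℝ → W →L[ℝ] V} {h : ℝ → W} {M a b K t : ℝ}
    (hM : 0 ≤ M) (ht : 0 < t)
    (hR : ∀ τ > (0:ℝ), ∀ w : W, ‖R τ w‖ ≤ M * τ ^ (a - 1) * ‖w‖)
    (hh : ∀ s > (0:ℝ), ‖h s‖ ≤ K * s ^ (-b))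
    (hB : IntervalIntegrable (fun s => (1 - s) ^ (a - 1) * s ^ (-b)) volume 0 1) :
    ‖∫ s in (0:ℝ)..t, R (t - s) (h s)‖ ≤
      M * K * t ^ (a - b) * ∫ s in (0:ℝ)..1, (1 - s) ^ (a - 1) * s ^ (-b) := by
  have hpointwise : ∀ᵐ s ∂volume, s ∈ Ioc 0 t →
      ‖R (t - s) (h s)‖ ≤ M * K * ((t - s) ^ (a - 1) * s ^ (-b)) := by
    filter_upwards [volume.ae_ne t] with s hst hs
    have hts : 0 < t - s := sub_pos.2 (lt_of_le_of_ne hs.2 hst)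
    calc ‖R (t - s) (h s)‖ ≤ M * (t - s) ^ (a - 1) * ‖h s‖ := hR _ hts _
      _ ≤ M * (t - s) ^ (a - 1) * (K * s ^ (-b)) := by gcongr; exact hh s hs.1
      _ = M * K * ((t - s) ^ (a - 1) * s ^ (-b)) := by ring
  calc ‖∫ s in (0:ℝ)..t, R (t - s) (h s)‖
      ≤ ∫ s in (0:ℝ)..t, M * K * ((t - s) ^ (a - 1) * s ^ (-b)) :=
        norm_integral_le_of_norm_le ht.le hpointwise
          ((intervalIntegrable_sub_rpow_mul_rpow_neg ht hB).const_mul _)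
    _ = _ := by
        rw [intervalIntegral.integral_const_mul, integral_sub_rpow_mul_rpow_neg ht]
        ring

lemma _root_.IsMildSolutionOn.sub_apply {R : ℝ → W →L[ℝ] V} {f : V → W} {g₁ g₂ u₁ u₂ : ℝ → V}
    {S : Set ℝ} (h₁ : IsMildSolutionOn R f g₁ u₁ S) (h₂ : IsMildSolutionOn R f g₂ u₂ S)
    {t : ℝ} (ht : t ∈ S) :
    (u₁ - u₂) t = (g₁ - g₂) t + ∫ s in (0:ℝ)..t, R (t - s) (f (u₁ s) - f (u₂ s)) := by
  obtain ⟨hint₁, hu₁⟩ := h₁.2 t ht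
  obtain ⟨hint₂, hu₂⟩ := h₂.2 t ht
  simp only [map_sub, integral_sub hint₁ hint₂, Pi.sub_apply, hu₁, hu₂]
  abel

end ContinuousDependence

open ContinuousDependence in
theorem continuous_dependence_global_general
    {V W : Type*} [NormedAddCommGroup V] [NormedSpace ℝ V]
    [NormedAddCommGroup W] [NormedSpace ℝ W]
    (ρ α ε M c B : ℝ)
    (hρ : 1 < ρ)
    (hM : 0 < M) (hc : 0 < c)
    (R : ℝ → W →L[ℝ] V)
    (hRbound : ∀ t > (0:ℝ), ∀ w : W, ‖R t w‖ ≤ M * t ^ (α * (ρ - 1) * ε - 1) * ‖w‖)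
    (f : V → W)
    (hf : ∀ x y : V, ‖f x - f y‖ ≤ c * (‖x‖ ^ (ρ - 1) + ‖y‖ ^ (ρ - 1)) * ‖x - y‖)
    (hBint : IntervalIntegrable
      (fun s => (1 - s) ^ (α * (ρ - 1) * ε - 1) * s ^ (-(α * ρ * ε))) volume 0 1)
    (hB : B = ∫ s in (0:ℝ)..1, (1 - s) ^ (α * (ρ - 1) * ε - 1) * s ^ (-(α * ρ * ε)))
    (μ : ℝ) (hμ : 0 < μ) (hsmall : M * c * μ ^ (ρ - 1) * B ≤ 1 / 4)
    (g₁ g₂ : ℝ → V)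
    (u₁ u₂ : ℝ → V)
    (hu₁ : IsMildSolutionOn R f g₁ u₁ (Ioi 0))
    (hu₂ : IsMildSolutionOn R f g₂ u₂ (Ioi 0))
    (hu₁bdd : ∀ t > (0:ℝ), t ^ (α * ε) * ‖u₁ t‖ ≤ μ)
    (hu₂bdd : ∀ t > (0:ℝ), t ^ (α * ε) * ‖u₂ t‖ ≤ μ) :
    sSup ((fun t => t ^ (α * ε) * ‖u₁ t - u₂ t‖) '' Ioi 0) ≤
      2 * sSup ((fun t => t ^ (α * ε) * ‖g₁ t - g₂ t‖) '' Ioi 0) := by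
  change weightedSup (α * ε) (u₁ - u₂) ≤ 2 * weightedSup (α * ε) (g₁ - g₂)
  set Φ := weightedSup (α * ε) (u₁ - u₂)
  have hdiff_bdd : ∀ t > (0:ℝ), t ^ (α * ε) * ‖(u₁ - u₂) t‖ ≤ 2 * μ := fun t ht => by
    have := mul_le_mul_of_nonneg_left (norm_sub_le (u₁ t) (u₂ t)) (Real.rpow_nonneg ht.le (α * ε))
    rw [Pi.sub_apply]
    linarith [hu₁bdd t ht, hu₂bdd t ht]
  have hnonlin : ∀ s > (0:ℝ), ‖f (u₁ s) - f (u₂ s)‖ ≤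
      2 * c * μ ^ (ρ - 1) * Φ * s ^ (-(α * ρ * ε)) := fun s hs => by
    rw [show α * ρ * ε = α * ε * ρ by ring]
    exact norm_sub_le_of_rpow_mul_norm_le hf hc.le hρ.le hμ.le hs (hu₁bdd s hs) (hu₂bdd s hs)
      (le_weightedSup hdiff_bdd hs)
  have hduhamel : ∀ t > (0:ℝ),
      t ^ (α * ε) * ‖∫ s in (0:ℝ)..t, R (t - s) (f (u₁ s) - f (u₂ s))‖ ≤ Φ / 2 := fun t ht => by
    rw [rpow_mul_le_iff_le_mul_rpow_neg ht]
    refine (norm_integral_le_of_kernel_bound hM.le ht hRbound hnonlin hBint).trans ?_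
    rw [← hB, show α * (ρ - 1) * ε - α * ρ * ε = -(α * ε) by ring]
    have := weightedSup_nonneg (α * ε) (u₁ - u₂)
    have := Real.rpow_nonneg ht.le (-(α * ε))
    calc M * (2 * c * μ ^ (ρ - 1) * Φ) * t ^ (-(α * ε)) * B
        = 2 * Φ * t ^ (-(α * ε)) * (M * c * μ ^ (ρ - 1) * B) := by ring
      _ ≤ 2 * Φ * t ^ (-(α * ε)) * (1 / 4) := by gcongr
      _ = Φ / 2 * t ^ (-(α * ε)) := by ring
  linarith [weightedSup_le_add hdiff_bdd (fun t ht => hu₁.sub_apply hu₂ ht) hduhamel]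

/-- **Global continuous-dependence estimate of Theorem 1.2.**
If `u₁, u₂` are mild solutions on `(0,∞)` with forcings `g₁, g₂` and weighted norms `≤ μ`,
where `M c μ^{ρ-1} B ≤ 1/4`, then
`sup_{t>0} t^{αε}‖u₁ t - u₂ t‖ ≤ 2 sup_{t>0} t^{αε}‖g₁ t - g₂ t‖`. -/
theorem continuous_dependence_global
    {V W : Type*} [NormedAddCommGroup V] [NormedSpace ℝ V] [CompleteSpace V]
    [NormedAddCommGroup W] [NormedSpace ℝ W] [CompleteSpace W]
    (ρ α ε M c B : ℝ)
    (hρ : 1 < ρ) (hα : 1 < α) (hε : 0 < ε) (hαρε : α * ρ * ε < 1)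
    (hM : 0 < M) (hc : 0 < c)
    (R : ℝ → W →L[ℝ] V)
    (hRcont : ∀ w : W, ContinuousOn (fun t => R t w) (Ioi (0:ℝ)))
    (hRbound : ∀ t > (0:ℝ), ∀ w : W, ‖R t w‖ ≤ M * t ^ (α * (ρ - 1) * ε - 1) * ‖w‖)
    (f : V → W) (hf0 : f 0 = 0)
    (hf : ∀ x y : V, ‖f x - f y‖ ≤ c * (‖x‖ ^ (ρ - 1) + ‖y‖ ^ (ρ - 1)) * ‖x - y‖)
    (hBint : IntervalIntegrable
      (fun s => (1 - s) ^ (α * (ρ - 1) * ε - 1) * s ^ (-(α * ρ * ε))) volume 0 1)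
    (hB : B = ∫ s in (0:ℝ)..1, (1 - s) ^ (α * (ρ - 1) * ε - 1) * s ^ (-(α * ρ * ε)))
    (μ : ℝ) (hμ : 0 < μ) (hsmall : M * c * μ ^ (ρ - 1) * B ≤ 1 / 4)
    (g₁ g₂ : ℝ → V) (hg₁ : ContinuousOn g₁ (Ioi 0)) (hg₂ : ContinuousOn g₂ (Ioi 0))
    (u₁ u₂ : ℝ → V)
    (hu₁ : IsMildSolutionOn R f g₁ u₁ (Ioi 0))
    (hu₂ : IsMildSolutionOn R f g₂ u₂ (Ioi 0))
    (hu₁bdd : ∀ t > (0:ℝ), t ^ (α * ε) * ‖u₁ t‖ ≤ μ)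
    (hu₂bdd : ∀ t > (0:ℝ), t ^ (α * ε) * ‖u₂ t‖ ≤ μ) :
    sSup ((fun t => t ^ (α * ε) * ‖u₁ t - u₂ t‖) '' Ioi 0) ≤
      2 * sSup ((fun t => t ^ (α * ε) * ‖g₁ t - g₂ t‖) '' Ioi 0) :=
  continuous_dependence_global_general ρ α ε M c B hρ hM hc R hRbound f hf hBint hB μ hμ hsmall g₁
    g₂ u₁ u₂ hu₁ hu₂ hu₁bdd hu₂bdd
end
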